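/- arXiv:2504.18335 — 8 statements merged into one kernel-verified Lean document; each statement's English description precedes it below -/
import Mathlib

section
/- Let h̄, d̄, k̄, δ, b, l be positive integers with 1 ≤ δ ≤ h̄ − 1 and h̄ − δ + 1 ≤ k̄ ≤ d̄, and set h = b·h̄. Let F and R be disjoint finite sets with |F| = h̄ and |R| = d̄, let β₁ : F × R → ℝ and β₂ : F × F → ℝ be nonnegative functions, and for each i ∈ F let F_i ⊆ F \ {i} with |F_i| = h̄ − δ. Assume: (H1) for every F_δ ⊆ F with |F_δ| = δ − 1 and every R_δ ⊆ R with |R_δ| = k̄ − h̄ + δ − 1, the sum ∑_{i ∈ F∖F_δ} ∑_{j ∈ R∖R_δ} β₁(i,j) ≥ (h̄ − δ + 1)·b·l; and (H2) for every i ∈ F and every R₁ ⊆ R with |R₁| = k̄ − 1, ∑_{j ∈ R∖R₁} β₁(i,j) + ∑_{i' ∈ F_i} β₂(i,i') ≥ b·l. Then ∑_{i ∈ F} ∑_{j ∈ R} β₁(i,j) + ∑_{i ∈ F} ∑_{i' ∈ F_i} β₂(i,i') ≥ h·(d̄ + h̄ − δ)·l / (d̄ − k̄ + h̄ − δ + 1).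 -/
open Finset

lemma filter_not_mem_powersetCard {α : Type*} [DecidableEq α] (R : Finset α) (m : ℕ)
    (j : α) :
    (R.powersetCard m).filter (fun S => j ∉ S) = (R.erase j).powersetCard m := by
  ext S
  simp only [mem_filter, mem_powersetCard, subset_erase]
  tauto

lemma sumB {α : Type*} [DecidableEq α] (R : Finset α) (m : ℕ) (f : α → ℝ) :
    ∑ S ∈ R.powersetCard m, ∑ j ∈ R \ S, f j
      = ((R.card - 1).choose m : ℝ) * ∑ j ∈ R, f j := by
  have h1 : ∀ S : Finset α, ∑ j ∈ R \ S, f j = ∑ j ∈ R, if j ∉ S then f j else 0 := by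
    intro S
    rw [Finset.sdiff_eq_filter, Finset.sum_filter]
  simp_rw [h1]
  rw [Finset.sum_comm, Finset.mul_sum]
  refine Finset.sum_congr rfl fun j hj => ?_
  rw [Finset.sum_ite, Finset.sum_const, Finset.sum_const_zero, add_zero,
    filter_not_mem_powersetCard, card_powersetCard, card_erase_of_mem hj,
    nsmul_eq_mul]


/-- **Lower bound on the repair bandwidth for rack-aware MSPCR codes** (Theorem 1).
`F` is the set of `hbar` host racks, `R` the set of `dbar` helper racks, `β₁ i j` the
number of symbols host rack `i` downloads from helper rack `j` in the download phase,
`β₂ i i'` the number of symbols host rack `i` downloads from host rack `i' ∈ Fi i` in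
the cooperative phase, and `l` the number of symbols per node.  The cut-set constraints
`H1` and `H2` imply `∑∑β₁ + ∑∑β₂ ≥ h(dbar + hbar − δ)l / (dbar − kbar + hbar − δ + 1)`
with `h = b·hbar`. -/
theorem stmt0 {α : Type*} [DecidableEq α]
    (hbar dbar kbar δ b l : ℕ)
    (hhbar : 0 < hbar) (hdbar : 0 < dbar) (hkbar : 0 < kbar) (hb : 0 < b) (hl : 0 < l)
    (hδ1 : 1 ≤ δ) (hδ2 : δ ≤ hbar - 1) (hkbar1 : hbar - δ + 1 ≤ kbar) (hkbar2 : kbar ≤ dbar)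
    (h : ℕ) (hh : h = b * hbar)
    (F R : Finset α) (hFR : Disjoint F R) (hFcard : F.card = hbar) (hRcard : R.card = dbar)
    (β₁ β₂ : α → α → ℝ)
    (hβ₁ : ∀ i ∈ F, ∀ j ∈ R, 0 ≤ β₁ i j)
    (hβ₂ : ∀ i ∈ F, ∀ i' ∈ F, 0 ≤ β₂ i i')
    (Fi : α → Finset α)
    (hFi : ∀ i ∈ F, Fi i ⊆ F \ {i})
    (hFicard : ∀ i ∈ F, (Fi i).card = hbar - δ)
    (H1 : ∀ Fδ ⊆ F, Fδ.card = δ - 1 → ∀ Rδ ⊆ R, Rδ.card + hbar + 1 = kbar + δ →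
      ((hbar : ℝ) - δ + 1) * b * l ≤ ∑ i ∈ F \ Fδ, ∑ j ∈ R \ Rδ, β₁ i j)
    (H2 : ∀ i ∈ F, ∀ R₁ ⊆ R, R₁.card = kbar - 1 →
      (b : ℝ) * l ≤ (∑ j ∈ R \ R₁, β₁ i j) + ∑ i' ∈ Fi i, β₂ i i') :
    (h : ℝ) * ((dbar : ℝ) + (hbar : ℝ) - (δ : ℝ)) * (l : ℝ)
        / ((dbar : ℝ) - (kbar : ℝ) + (hbar : ℝ) - (δ : ℝ) + 1)
      ≤ (∑ i ∈ F, ∑ j ∈ R, β₁ i j) + ∑ i ∈ F, ∑ i' ∈ Fi i, β₂ i i' := by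
  -- basic numeric facts
  have hδh : δ + 1 ≤ hbar := by omega
  have hkd : hbar + 1 ≤ kbar + δ := by omega
  set m : ℕ := kbar + δ - (hbar + 1) with hm
  have hmd : m + 1 ≤ dbar := by omega
  set S₁ : ℝ := ∑ i ∈ F, ∑ j ∈ R, β₁ i j with hS₁
  set S₂ : ℝ := ∑ i ∈ F, ∑ i' ∈ Fi i, β₂ i i' with hS₂
  set Dr : ℝ := (dbar : ℝ) - (kbar : ℝ) + (hbar : ℝ) - (δ : ℝ) + 1 with hDr
  have hDrpos : 0 < Dr := by
    have h1 : (kbar : ℝ) ≤ (dbar : ℝ) := by exact_mod_cast hkbar2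
    have h2 : (δ : ℝ) + 1 ≤ (hbar : ℝ) := by exact_mod_cast hδh
    simp only [hDr]; linarith
  -- casts of the binomial coefficients
  set A : ℝ := (hbar.choose (δ - 1) : ℝ) with hA
  set A' : ℝ := ((hbar - 1).choose (δ - 1) : ℝ) with hA'
  set B : ℝ := (dbar.choose m : ℝ) with hB
  set B' : ℝ := ((dbar - 1).choose m : ℝ) with hB'
  set C : ℝ := (dbar.choose (kbar - 1) : ℝ) with hC
  set C' : ℝ := ((dbar - 1).choose (kbar - 1) : ℝ) with hC'
  have hA'pos : (0:ℝ) < A' := by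
    have h0 : 0 < (hbar - 1).choose (δ - 1) := Nat.choose_pos (by omega)
    rw [hA']; exact_mod_cast h0
  have hB'pos : (0:ℝ) < B' := by
    have h0 : 0 < (dbar - 1).choose m := Nat.choose_pos (by omega)
    rw [hB']; exact_mod_cast h0
  have hCpos : (0:ℝ) < C := by
    have h0 : 0 < dbar.choose (kbar - 1) := Nat.choose_pos (by omega)
    rw [hC]; exact_mod_cast h0
  -- binomial identities
  have e_h : ((hbar : ℝ) - δ + 1) * A = (hbar : ℝ) * A' := by
    have t := Nat.choose_mul_succ_eq (hbar - 1) (δ - 1)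
    have t1 : hbar - 1 + 1 = hbar := by omega
    rw [t1] at t
    have t' := congrArg (Nat.cast (R := ℝ)) t
    push_cast [show δ - 1 ≤ hbar from by omega, show 1 ≤ δ from hδ1] at t'
    rw [hA, hA']
    linarith [t']
  have e_d : Dr * B = (dbar : ℝ) * B' := by
    have t := Nat.choose_mul_succ_eq (dbar - 1) m
    have t1 : dbar - 1 + 1 = dbar := by omega
    rw [t1] at t
    have t' := congrArg (Nat.cast (R := ℝ)) t
    push_cast [show m ≤ dbar from by omega] at t'
    have h2 : ((m : ℕ) : ℝ) = (kbar : ℝ) + δ - hbar - 1 := by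
      have hq : m + (hbar + 1) = kbar + δ := by omega
      have hq' := congrArg (Nat.cast (R := ℝ)) hq
      push_cast at hq'; linarith
    rw [hB, hB', hDr]
    linear_combination -t' + ((dbar.choose m : ℕ) : ℝ) * h2
  have e_c : ((dbar : ℝ) - kbar + 1) * C = (dbar : ℝ) * C' := by
    have t := Nat.choose_mul_succ_eq (dbar - 1) (kbar - 1)
    have t1 : dbar - 1 + 1 = dbar := by omega
    rw [t1] at t
    have t' := congrArg (Nat.cast (R := ℝ)) t
    push_cast [show kbar - 1 ≤ dbar from by omega, show 1 ≤ kbar from hkbar] at t'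
    rw [hC, hC']
    linarith [t']
  -- Step 1: averaging H1
  have claim1 : (hbar : ℝ) * dbar * b * l ≤ Dr * S₁ := by
    have hsum : (A * B) * (((hbar : ℝ) - δ + 1) * b * l)
        ≤ (A' * B') * S₁ := by
      have key : ∑ Fδ ∈ F.powersetCard (δ - 1), ∑ Rδ ∈ R.powersetCard m,
          (∑ i ∈ F \ Fδ, ∑ j ∈ R \ Rδ, β₁ i j)
          = (A' * B') * S₁ := by
        have inner : ∀ Fδ : Finset α, ∑ Rδ ∈ R.powersetCard m,
            (∑ i ∈ F \ Fδ, ∑ j ∈ R \ Rδ, β₁ i j)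
            = B' * ∑ i ∈ F \ Fδ, ∑ j ∈ R, β₁ i j := by
          intro Fδ
          rw [Finset.sum_comm]
          have : ∀ i, ∑ Rδ ∈ R.powersetCard m, ∑ j ∈ R \ Rδ, β₁ i j
              = B' * ∑ j ∈ R, β₁ i j := by
            intro i
            rw [sumB, hRcard]
          simp_rw [this]
          rw [← Finset.mul_sum]
        simp_rw [inner]
        rw [← Finset.mul_sum, sumB, hFcard]
        ring
      have hle : ∑ Fδ ∈ F.powersetCard (δ - 1), ∑ Rδ ∈ R.powersetCard m,
          (((hbar : ℝ) - δ + 1) * b * l)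
          ≤ ∑ Fδ ∈ F.powersetCard (δ - 1), ∑ Rδ ∈ R.powersetCard m,
          (∑ i ∈ F \ Fδ, ∑ j ∈ R \ Rδ, β₁ i j) := by
        refine Finset.sum_le_sum fun Fδ hFδ => Finset.sum_le_sum fun Rδ hRδ => ?_
        rw [Finset.mem_powersetCard] at hFδ hRδ
        exact H1 Fδ hFδ.1 hFδ.2 Rδ hRδ.1 (by omega)
      rw [key] at hle
      calc (A * B) * (((hbar : ℝ) - δ + 1) * b * l)
          = ∑ Fδ ∈ F.powersetCard (δ - 1), ∑ Rδ ∈ R.powersetCard m,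
            (((hbar : ℝ) - δ + 1) * b * l) := by
            simp only [Finset.sum_const, card_powersetCard, hFcard, hRcard,
              smul_smul, nsmul_eq_mul, hA, hB]
            push_cast
            ring
        _ ≤ (A' * B') * S₁ := hle
    have step : ((hbar : ℝ) * dbar * b * l) * (A' * B') ≤ (Dr * S₁) * (A' * B') := by
      have h2 := mul_le_mul_of_nonneg_left hsum hDrpos.le
      have e1 : ((hbar : ℝ) * dbar * b * l) * (A' * B')
          = Dr * ((A * B) * (((hbar : ℝ) - δ + 1) * b * l)) := by
        linear_combination (-(b:ℝ) * l * dbar * B') * e_h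
          + (-(b:ℝ) * l * ((hbar:ℝ) - δ + 1) * A) * e_d
      rw [e1]
      calc Dr * ((A * B) * (((hbar : ℝ) - δ + 1) * b * l))
          ≤ Dr * ((A' * B') * S₁) := h2
        _ = (Dr * S₁) * (A' * B') := by ring
    exact le_of_mul_le_mul_right step (by positivity)
  -- Step 2: averaging H2
  have claim2 : (hbar : ℝ) * (dbar * b * l) ≤ ((dbar : ℝ) - kbar + 1) * S₁ + dbar * S₂ := by
    have per_i : ∀ i ∈ F, (dbar : ℝ) * b * l
        ≤ ((dbar : ℝ) - kbar + 1) * (∑ j ∈ R, β₁ i j) + dbar * (∑ i' ∈ Fi i, β₂ i i') := by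
      intro i hi
      have hsum : C * ((b : ℝ) * l)
          ≤ C' * (∑ j ∈ R, β₁ i j) + C * (∑ i' ∈ Fi i, β₂ i i') := by
        have hle : ∑ R₁ ∈ R.powersetCard (kbar - 1), ((b : ℝ) * l)
            ≤ ∑ R₁ ∈ R.powersetCard (kbar - 1),
              ((∑ j ∈ R \ R₁, β₁ i j) + ∑ i' ∈ Fi i, β₂ i i') := by
          refine Finset.sum_le_sum fun R₁ hR₁ => ?_
          rw [Finset.mem_powersetCard] at hR₁
          exact H2 i hi R₁ hR₁.1 hR₁.2
        rw [Finset.sum_add_distrib, sumB, hRcard, Finset.sum_const, Finset.sum_const,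
          card_powersetCard, hRcard, nsmul_eq_mul, nsmul_eq_mul] at hle
        calc C * ((b : ℝ) * l) = (dbar.choose (kbar - 1) : ℝ) * ((b:ℝ) * l) := by rw [hC]
          _ ≤ _ := hle
      have step : ((dbar : ℝ) * b * l) * C
          ≤ (((dbar : ℝ) - kbar + 1) * (∑ j ∈ R, β₁ i j)
              + dbar * (∑ i' ∈ Fi i, β₂ i i')) * C := by
        have h2 := mul_le_mul_of_nonneg_left hsum (by positivity : (0:ℝ) ≤ (dbar:ℝ))
        have e1 : ((dbar : ℝ) * b * l) * C = (dbar : ℝ) * (C * ((b:ℝ) * l)) := by ring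
        have e2 : (((dbar : ℝ) - kbar + 1) * (∑ j ∈ R, β₁ i j)
              + dbar * (∑ i' ∈ Fi i, β₂ i i')) * C
            = (dbar : ℝ) * (C' * (∑ j ∈ R, β₁ i j) + C * (∑ i' ∈ Fi i, β₂ i i')) := by
          linear_combination (∑ j ∈ R, β₁ i j) * e_c
        rw [e1, e2]
        exact h2
      exact le_of_mul_le_mul_right step hCpos
    have := Finset.sum_le_sum per_i
    rw [Finset.sum_const, hFcard, nsmul_eq_mul, Finset.sum_add_distrib,
      ← Finset.mul_sum, ← Finset.mul_sum] at this
    calc (hbar : ℝ) * (dbar * b * l) = (hbar : ℝ) * ((dbar : ℝ) * b * l) := by ring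
      _ ≤ _ := this
  -- Combine
  rw [div_le_iff₀ hDrpos]
  have hk1 : (0:ℝ) ≤ (kbar : ℝ) - 1 := by
    have : (1:ℝ) ≤ (kbar : ℝ) := by exact_mod_cast hkbar
    linarith
  have m1 := mul_le_mul_of_nonneg_left claim1 hk1
  have m2 := mul_le_mul_of_nonneg_left claim2 hDrpos.le
  have hdbarpos : (0:ℝ) < (dbar : ℝ) := by exact_mod_cast hdbar
  have goal' : (dbar : ℝ) * ((h : ℝ) * ((dbar : ℝ) + (hbar : ℝ) - (δ : ℝ)) * (l : ℝ))
      ≤ (dbar : ℝ) * ((S₁ + S₂) * Dr) := by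
    have hhc : (h : ℝ) = (b : ℝ) * hbar := by rw [hh]; push_cast; ring
    have key : (dbar : ℝ) * ((S₁ + S₂) * Dr)
        = Dr * (((dbar : ℝ) - kbar + 1) * S₁ + dbar * S₂)
          + ((kbar : ℝ) - 1) * (Dr * S₁) := by
      rw [hDr]; ring
    have key2 : (dbar : ℝ) * ((h : ℝ) * ((dbar : ℝ) + (hbar : ℝ) - (δ : ℝ)) * (l : ℝ))
        = Dr * ((hbar : ℝ) * (dbar * b * l))
          + ((kbar : ℝ) - 1) * ((hbar : ℝ) * dbar * b * l) := by
      rw [hhc, hDr]; ring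
    rw [key, key2]
    exact add_le_add m2 m1
  exact le_of_mul_le_mul_left goal' hdbarpos
end

section
/- Let d̄ ≥ k̄ ≥ 1 be integers, let F and R be disjoint finite sets with |R| = d̄, let β₁ : F × R → ℝ, g : F → ℝ, and c ∈ ℝ. If for every i ∈ F and every R₁ ⊆ R with |R₁| = k̄ − 1 we have ∑_{j∈R∖R₁} β₁(i,j) + g(i) ≥ c, then ∑_{i∈F} ∑_{j∈R} β₁(i,j) + (d̄/(d̄ − k̄ + 1))·∑_{i∈F} g(i) ≥ d̄·|F|·c/(d̄ − k̄ + 1). -/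
/-- **Intermediate inequality from Case 2** of the proof of the repair-bandwidth lower
bound: summing the cut-set constraint over all `i ∈ F` and all `(kbar−1)`-subsets `R₁`
of the set `R` of `dbar` helper racks.  In the application `g i` is the total number of
symbols host rack `i` receives in the cooperative phase and `c = b·l`. -/
theorem stmt4 {α : Type*} [DecidableEq α]
    (dbar kbar : ℕ) (hkbar : 1 ≤ kbar) (hdbar : kbar ≤ dbar)
    (F R : Finset α) (hFR : Disjoint F R) (hRcard : R.card = dbar)
    (β₁ : α → α → ℝ) (g : α → ℝ) (c : ℝ)
    (hyp : ∀ i ∈ F, ∀ R₁ ⊆ R, R₁.card = kbar - 1 →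
      c ≤ (∑ j ∈ R \ R₁, β₁ i j) + g i) :
    (dbar : ℝ) * (F.card : ℝ) * c / ((dbar : ℝ) - (kbar : ℝ) + 1)
      ≤ (∑ i ∈ F, ∑ j ∈ R, β₁ i j)
        + ((dbar : ℝ) / ((dbar : ℝ) - (kbar : ℝ) + 1)) * ∑ i ∈ F, g i := by
  set m := kbar - 1 with hm
  have hmd : m < dbar := by omega
  have hmd' : m ≤ dbar := hmd.le
  have hdpos : 1 ≤ dbar := le_trans hkbar hdbar
  have hD : ((dbar : ℝ) - (kbar : ℝ) + 1) = ((dbar - m : ℕ) : ℝ) := by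
    rw [Nat.cast_sub hmd', hm, Nat.cast_sub hkbar]
    push_cast; ring
  have hDpos : (0:ℝ) < ((dbar - m : ℕ) : ℝ) := by
    have : 0 < dbar - m := by omega
    exact_mod_cast this
  set N := dbar.choose m with hN
  set M := (dbar - 1).choose m with hM
  have hNpos : 0 < N := Nat.choose_pos hmd'
  have hNRpos : (0:ℝ) < (N:ℝ) := by exact_mod_cast hNpos
  -- combinatorial identity : dbar * M = (dbar - m) * N
  have hid : dbar * M = (dbar - m) * N := by
    have h2 : Nat.succ (dbar - 1) * M = (dbar - 1 + 1).choose (m+1) * (m+1) :=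
      Nat.add_one_mul_choose_eq (dbar - 1) m
    have h3 : dbar - 1 + 1 = dbar := by omega
    rw [Nat.succ_eq_add_one, h3] at h2
    rw [h2, Nat.choose_succ_right_eq, Nat.mul_comm]
  have hidR : (dbar:ℝ) * (M:ℝ) = ((dbar - m : ℕ):ℝ) * (N:ℝ) := by exact_mod_cast hid
  -- key per-i inequality
  have key : ∀ i ∈ F, (dbar:ℝ) * c
      ≤ ((dbar - m : ℕ):ℝ) * (∑ j ∈ R, β₁ i j) + (dbar:ℝ) * g i := by
    intro i hi
    set P := R.powersetCard m with hP
    have hPcard : P.card = N := by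
      rw [hP, Finset.card_powersetCard, hRcard]
    have hsum : (N : ℝ) * c ≤ ∑ R₁ ∈ P, ((∑ j ∈ R \ R₁, β₁ i j) + g i) := by
      calc (N : ℝ) * c = ∑ _R₁ ∈ P, c := by
            rw [Finset.sum_const, nsmul_eq_mul, hPcard]
        _ ≤ _ := Finset.sum_le_sum (fun R₁ hR₁ => by
            rw [hP, Finset.mem_powersetCard] at hR₁
            exact hyp i hi R₁ hR₁.1 hR₁.2)
    have hswap : ∑ R₁ ∈ P, ∑ j ∈ R \ R₁, β₁ i j
        = (M : ℝ) * ∑ j ∈ R, β₁ i j := by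
      have step1 : ∀ R₁ ∈ P, ∑ j ∈ R \ R₁, β₁ i j
          = ∑ j ∈ R, if j ∉ R₁ then β₁ i j else 0 := by
        intro R₁ _
        rw [Finset.sdiff_eq_filter, Finset.sum_filter]
      rw [Finset.sum_congr rfl step1, Finset.sum_comm]
      rw [Finset.mul_sum]
      refine Finset.sum_congr rfl (fun j hj => ?_)
      rw [← Finset.sum_filter]
      have hfilt : P.filter (fun R₁ => j ∉ R₁) = (R.erase j).powersetCard m := by
        ext R₁
        simp only [Finset.mem_filter, hP, Finset.mem_powersetCard,
          Finset.subset_erase]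
        tauto
      rw [hfilt, Finset.sum_const, nsmul_eq_mul, Finset.card_powersetCard,
        Finset.card_erase_of_mem hj, hRcard]
    rw [Finset.sum_add_distrib, hswap, Finset.sum_const, hPcard, nsmul_eq_mul] at hsum
    -- hsum : N * c ≤ M * S + N * g i
    have h4 : (dbar:ℝ) * ((N:ℝ) * c)
        ≤ (dbar:ℝ) * ((M:ℝ) * (∑ j ∈ R, β₁ i j) + (N:ℝ) * g i) :=
      mul_le_mul_of_nonneg_left hsum (Nat.cast_nonneg dbar)
    have h5 : ((dbar - m : ℕ):ℝ) * (N:ℝ) * (∑ j ∈ R, β₁ i j)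
        = (dbar:ℝ) * (M:ℝ) * (∑ j ∈ R, β₁ i j) := by rw [hidR]
    have h4' : (N:ℝ) * ((dbar:ℝ) * c)
        ≤ (N:ℝ) * (((dbar - m : ℕ):ℝ) * (∑ j ∈ R, β₁ i j) + (dbar:ℝ) * g i) := by
      nlinarith [h4, h5]
    exact le_of_mul_le_mul_left h4' hNRpos
  -- sum over F
  have hsumF : (F.card : ℝ) * ((dbar:ℝ) * c)
      ≤ ((dbar - m : ℕ):ℝ) * (∑ i ∈ F, ∑ j ∈ R, β₁ i j) + (dbar:ℝ) * ∑ i ∈ F, g i := by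
    rw [Finset.mul_sum, Finset.mul_sum, ← Finset.sum_add_distrib]
    calc (F.card : ℝ) * ((dbar:ℝ) * c) = ∑ _i ∈ F, (dbar:ℝ) * c := by
          rw [Finset.sum_const, nsmul_eq_mul]
      _ ≤ _ := Finset.sum_le_sum key
  rw [hD, div_le_iff₀ hDpos]
  have hdm : (dbar:ℝ) / ((dbar - m : ℕ):ℝ) * (∑ i ∈ F, g i) * ((dbar - m : ℕ):ℝ)
      = (dbar:ℝ) * ∑ i ∈ F, g i := by
    rw [div_mul_eq_mul_div, div_mul_cancel₀ _ hDpos.ne']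
  rw [add_mul, hdm]
  nlinarith [hsumF]
end

section
/- Let h̄, d̄, k̄, δ, b be positive integers with 1 ≤ δ ≤ h̄ − 1 and h̄ − δ + 1 ≤ k̄ ≤ d̄, set h = b·h̄ and t = d̄ − k̄ + h̄ − δ + 1, and let l > 0 be a real number. Let F and R be disjoint finite sets with |F| = h̄ and |R| = d̄, let β₁ : F × R → ℝ and g : F → ℝ. Assume that for every i ∈ F and every R₁ ⊆ R with |R₁| = k̄ − 1 we have ∑_{j∈R∖R₁} β₁(i,j) + g(i) ≥ b·l, and assume ∑_{i∈F} ∑_{j∈R} β₁(i,j) ≤ d̄·h·l/t. Then ∑_{i∈F} g(i) ≥ h·(h̄ − δ)·l/t. -/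
/-- Counting identity: summing `∑_{j ∈ R∖R₁} β j` over all `m`-subsets `R₁` of `R`
counts each `j ∈ R` exactly `(|R|-1).choose m` times. -/
lemma sum_sdiff_powersetCard' {α : Type*} [DecidableEq α] (R : Finset α) (m : ℕ) (β : α → ℝ) :
    ∑ R₁ ∈ R.powersetCard m, ∑ j ∈ R \ R₁, β j
      = ((R.card - 1).choose m : ℝ) * ∑ j ∈ R, β j := by
  calc ∑ R₁ ∈ R.powersetCard m, ∑ j ∈ R \ R₁, β j
      = ∑ R₁ ∈ R.powersetCard m, ∑ j ∈ R, if j ∉ R₁ then β j else 0 := by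
        refine Finset.sum_congr rfl fun R₁ hR₁ => ?_
        rw [Finset.sdiff_eq_filter, Finset.sum_filter]
    _ = ∑ j ∈ R, ∑ R₁ ∈ R.powersetCard m, if j ∉ R₁ then β j else 0 := Finset.sum_comm
    _ = ∑ j ∈ R, ((R.card - 1).choose m : ℝ) * β j := by
        refine Finset.sum_congr rfl fun j hj => ?_
        rw [Finset.sum_ite, Finset.sum_const, Finset.sum_const_zero, add_zero]
        have hf : (R.powersetCard m).filter (fun R₁ => j ∉ R₁) = (R.erase j).powersetCard m := by
          ext R₁
          simp only [Finset.mem_filter, Finset.mem_powersetCard, Finset.subset_erase]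
          tauto
        rw [hf, Finset.card_powersetCard, Finset.card_erase_of_mem hj, nsmul_eq_mul]
    _ = _ := by rw [← Finset.mul_sum]

/-- **Inequality (5)** in the proof of the repair-bandwidth lower bound: if the total
download-phase bandwidth `∑∑β₁` is at most `dbar·h·l/t` with
`t = dbar − kbar + hbar − δ + 1`, then the cooperative-phase bandwidth `∑ g` is at least
`h·(hbar − δ)·l/t`.  Here `F` is the set of `hbar` host racks each with `b` failed nodes
(`h = b·hbar`), `R` the set of `dbar` helper racks, `l` the number of symbols per node. -/
theorem stmt5 {α : Type*} [DecidableEq α]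
    (hbar dbar kbar δ b h t : ℕ)
    (hhbar : 0 < hbar) (hdbar : 0 < dbar) (hkbar : 0 < kbar) (hb : 0 < b)
    (hδ1 : 1 ≤ δ) (hδ2 : δ ≤ hbar - 1) (hkbar1 : hbar - δ + 1 ≤ kbar) (hkbar2 : kbar ≤ dbar)
    (hh : h = b * hbar) (ht : t = dbar - kbar + hbar - δ + 1)
    (l : ℝ) (hl : 0 < l)
    (F R : Finset α) (hFR : Disjoint F R) (hFcard : F.card = hbar) (hRcard : R.card = dbar)
    (β₁ : α → α → ℝ) (g : α → ℝ)
    (hyp1 : ∀ i ∈ F, ∀ R₁ ⊆ R, R₁.card = kbar - 1 →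
      (b : ℝ) * l ≤ (∑ j ∈ R \ R₁, β₁ i j) + g i)
    (hyp2 : ∑ i ∈ F, ∑ j ∈ R, β₁ i j ≤ (dbar : ℝ) * h * l / (t : ℝ)) :
    (h : ℝ) * ((hbar : ℝ) - (δ : ℝ)) * l / (t : ℝ) ≤ ∑ i ∈ F, g i := by
  set m := kbar - 1 with hm
  set N := dbar.choose m with hN
  set C := (dbar - 1).choose m with hC
  set S := ∑ i ∈ F, ∑ j ∈ R, β₁ i j with hS
  set G := ∑ i ∈ F, g i with hG
  have hPcard : (R.powersetCard m).card = N := by rw [Finset.card_powersetCard, hRcard]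
  have hNpos : 0 < N := Nat.choose_pos (by omega)
  have hNR : (0:ℝ) < (N:ℝ) := by exact_mod_cast hNpos
  have htpos : (0:ℝ) < (t:ℝ) := by
    have : 0 < t := by omega
    exact_mod_cast this
  -- per-row inequality obtained by summing hyp1 over all (k̄-1)-subsets R₁
  have per : ∀ i ∈ F, (N:ℝ) * ((b:ℝ) * l) ≤ (C:ℝ) * (∑ j ∈ R, β₁ i j) + (N:ℝ) * g i := by
    intro i hi
    have h1 : ∑ _R₁ ∈ R.powersetCard m, ((b:ℝ) * l)
        ≤ ∑ R₁ ∈ R.powersetCard m, ((∑ j ∈ R \ R₁, β₁ i j) + g i) := by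
      refine Finset.sum_le_sum fun R₁ hR₁ => ?_
      obtain ⟨hsub, hcard⟩ := Finset.mem_powersetCard.mp hR₁
      exact hyp1 i hi R₁ hsub hcard
    rw [Finset.sum_const, hPcard, nsmul_eq_mul, Finset.sum_add_distrib,
      sum_sdiff_powersetCard', hRcard, Finset.sum_const, hPcard, nsmul_eq_mul] at h1
    exact h1
  have H : (hbar:ℝ) * ((N:ℝ) * ((b:ℝ) * l)) ≤ (C:ℝ) * S + (N:ℝ) * G := by
    have h2 := Finset.sum_le_sum per
    rw [Finset.sum_const, hFcard, nsmul_eq_mul, Finset.sum_add_distrib,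
      ← Finset.mul_sum, ← Finset.mul_sum] at h2
    exact h2
  -- counting identity: dbar * C(dbar-1, m) = C(dbar, m) * (dbar - m)
  have idnat : dbar * C = N * (dbar - m) := by
    obtain ⟨n, rfl⟩ : ∃ n, dbar = n + 1 := ⟨dbar - 1, by omega⟩
    rw [hC, hN, Nat.succ_sub_one, Nat.add_one_mul_choose_eq, Nat.choose_succ_right_eq]
  have idR : (C:ℝ) * (dbar:ℝ) = (N:ℝ) * ((dbar:ℝ) - (kbar:ℝ) + 1) := by
    have hdm : dbar - m = dbar - kbar + 1 := by omega
    rw [hdm] at idnat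
    have h3 := congrArg (Nat.cast (R := ℝ)) idnat
    push_cast [Nat.cast_sub hkbar2] at h3
    linarith
  have htR : (t:ℝ) = (dbar:ℝ) - (kbar:ℝ) + (hbar:ℝ) - (δ:ℝ) + 1 := by
    subst ht
    push_cast [Nat.cast_sub hkbar2, Nat.cast_sub (show δ ≤ dbar - kbar + hbar by omega)]
    ring
  have hhR : (h:ℝ) = (b:ℝ) * (hbar:ℝ) := by rw [hh]; push_cast; ring
  rw [div_le_iff₀ htpos]
  rw [le_div_iff₀ htpos] at hyp2
  have hC2 : (C:ℝ) * (S * (t:ℝ)) ≤ (C:ℝ) * ((dbar:ℝ) * (h:ℝ) * l) :=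
    mul_le_mul_of_nonneg_left hyp2 (Nat.cast_nonneg C)
  have Ht : (hbar:ℝ) * ((N:ℝ) * ((b:ℝ) * l)) * (t:ℝ) ≤ ((C:ℝ) * S + (N:ℝ) * G) * (t:ℝ) :=
    mul_le_mul_of_nonneg_right H htpos.le
  have e2 : (N:ℝ) * ((h:ℝ) * ((hbar:ℝ) - (δ:ℝ)) * l)
      = (hbar:ℝ) * ((N:ℝ) * ((b:ℝ) * l)) * (t:ℝ) - (C:ℝ) * ((dbar:ℝ) * (h:ℝ) * l) := by
    rw [hhR, htR]
    linear_combination ((b:ℝ) * (hbar:ℝ) * l) * idR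
  have step : (N:ℝ) * ((h:ℝ) * ((hbar:ℝ) - (δ:ℝ)) * l) ≤ (N:ℝ) * (G * (t:ℝ)) := by
    rw [e2]; nlinarith [Ht, hC2]
  exact le_of_mul_le_mul_left step hNR
end

section
/- Let n̄, u, s̄ be positive integers, set n = n̄·u, and let 𝔽 be a finite field with |𝔽| ≥ n·s̄ + 1 and with u dividing |𝔽| − 1. Let ξ be a generator of the multiplicative group 𝔽ˣ and let θ ∈ 𝔽 be an element of multiplicative order u. Then the n·s̄ elements θ^g·ξ^{i·s̄+j}, for g ∈ {0,…,u−1}, i ∈ {0,…,n̄−1}, j ∈ {0,…,s̄−1}, are pairwise distinct. -/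
/-- **Distinctness of the evaluation points** `θ^g · ξ^{i·sbar+j}` used in the
construction: if `𝔽` is a finite field with `|𝔽| ≥ n·sbar + 1` (`n = nbar·u`) and
`u ∣ |𝔽| − 1`, `ξ` a generator of `𝔽ˣ` and `θ` an element of multiplicative order `u`,
then the `n·sbar` elements `θ^g · ξ^{i·sbar+j}` (`g < u`, `i < nbar`, `j < sbar`)
are pairwise distinct. -/
theorem stmt6 {𝔽 : Type*} [Field 𝔽] [Fintype 𝔽]
    (nbar u sbar n : ℕ)
    (hnbar : 0 < nbar) (hu : 0 < u) (hsbar : 0 < sbar) (hn : n = nbar * u)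
    (hcard : n * sbar + 1 ≤ Fintype.card 𝔽) (hdvd : u ∣ Fintype.card 𝔽 - 1)
    (ξ θ : 𝔽) (hξ : orderOf ξ = Fintype.card 𝔽 - 1) (hθ : orderOf θ = u) :
    ∀ g < u, ∀ g' < u, ∀ i < nbar, ∀ i' < nbar, ∀ j < sbar, ∀ j' < sbar,
      θ ^ g * ξ ^ (i * sbar + j) = θ ^ g' * ξ ^ (i' * sbar + j') →
      g = g' ∧ i = i' ∧ j = j' := by
  intro g hg g' hg' i hi i' hi' j hj j' hj' heq
  set q := Fintype.card 𝔽 with hq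
  have hq1 : n * sbar + 1 ≤ q := hcard
  have hns : 0 < n * sbar := by subst hn; positivity
  have hθu : θ ^ u = 1 := by rw [← hθ]; exact pow_orderOf_eq_one θ
  have hξo : ξ ^ (q - 1) = 1 := by rw [← hξ]; exact pow_orderOf_eq_one ξ
  have hξne : ξ ≠ 0 := by
    intro h
    rw [h, zero_pow (by omega)] at hξo
    exact one_ne_zero hξo.symm
  set e := i * sbar + j with he
  set e' := i' * sbar + j' with he'
  -- raise to the u-th power
  have key : ∀ m k : ℕ, (θ ^ m * ξ ^ k) ^ u = ξ ^ (u * k) := by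
    intro m k
    rw [mul_pow, ← pow_mul, ← pow_mul, mul_comm m u, pow_mul, hθu, one_pow, one_mul,
      mul_comm k u]
  have h2 : ξ ^ (u * e) = ξ ^ (u * e') := by
    rw [← key g e, ← key g' e', heq]
  have hθne : θ ≠ 0 := by
    intro h
    rw [h, zero_pow (by omega)] at hθu
    exact one_ne_zero hθu.symm
  have cancel : ∀ (x : 𝔽) (a b : ℕ), x ≠ 0 → x ^ a = x ^ b → a ≤ b →
      orderOf x ∣ (b - a) := by
    intro x a b hx hab hle
    have h1 : x ^ a * x ^ (b - a) = x ^ a * 1 := by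
      rw [mul_one, ← pow_add, Nat.add_sub_cancel' hle, hab]
    exact orderOf_dvd_of_pow_eq_one (mul_left_cancel₀ (pow_ne_zero _ hx) h1)
  have hbound : ∀ a b : ℕ, a < nbar → b < sbar → u * (a * sbar + b) < q - 1 := by
    intro a b ha hb
    have : a * sbar + b < nbar * sbar := by
      calc a * sbar + b < a * sbar + sbar := by omega
        _ = (a + 1) * sbar := by ring
        _ ≤ nbar * sbar := Nat.mul_le_mul_right _ (by omega)
    have h3 : u * (a * sbar + b) < u * (nbar * sbar) := by
      exact (Nat.mul_lt_mul_left hu).mpr this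
    have : u * (nbar * sbar) = n * sbar := by rw [hn]; ring
    omega
  have hee : e = e' := by
    have hb1 : u * e < q - 1 := hbound i j hi hj
    have hb2 : u * e' < q - 1 := hbound i' j' hi' hj'
    refine Nat.eq_of_mul_eq_mul_left hu ?_
    rcases le_total (u * e) (u * e') with hle | hle
    · have hd := cancel ξ (u * e) (u * e') hξne h2 hle
      rw [hξ] at hd
      have := Nat.eq_zero_of_dvd_of_lt hd
      omega
    · have hd := cancel ξ (u * e') (u * e) hξne h2.symm hle
      rw [hξ] at hd
      have := Nat.eq_zero_of_dvd_of_lt hd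
      omega
  have hξe : ξ ^ e ≠ 0 := pow_ne_zero _ hξne
  have hθg : θ ^ g = θ ^ g' := by
    rw [hee] at heq hξe
    exact mul_right_cancel₀ hξe heq
  have hgg : g = g' := by
    rcases le_total g g' with hle | hle
    · have hd := cancel θ g g' hθne hθg hle
      rw [hθ] at hd
      have := Nat.eq_zero_of_dvd_of_lt hd
      omega
    · have hd := cancel θ g' g hθne hθg.symm hle
      rw [hθ] at hd
      have := Nat.eq_zero_of_dvd_of_lt hd
      omega
  have hii : i = i' := by
    have : (sbar * i + j) / sbar = (sbar * i' + j') / sbar := by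
      rw [mul_comm sbar i, mul_comm sbar i', ← he, ← he', hee]
    rwa [Nat.mul_add_div hsbar, Nat.mul_add_div hsbar,
      Nat.div_eq_of_lt hj, Nat.div_eq_of_lt hj', Nat.add_zero, Nat.add_zero] at this
  refine ⟨hgg, hii, ?_⟩
  have := hee
  rw [he, he', hii] at this
  omega
end

section
/- Let n̄, u, s̄, k be positive integers with n = n̄·u and k < n, and set r = n − k. Let 𝔽 be a finite field with |𝔽| ≥ n·s̄ + 1 and with u dividing |𝔽| − 1, let ξ be a generator of 𝔽ˣ, let θ ∈ 𝔽 have multiplicative order u, and set λ_{i,j} = ξ^{i·s̄+j}. Suppose c : {0,…,n−1} × {0,…,s̄^n̄ − 1} → 𝔽 satisfies, for every t ∈ {0,…,r−1} and every a ∈ {0,…,s̄^n̄ − 1} with s̄-ary digits (a_{n̄−1},…,a₀), the parity-check equation ∑_{i=0}^{n̄−1} ∑_{g=0}^{u−1} θ^{g·t}·λ_{i,a_i}^t·c(i·u+g, a) = 0. If there exists a set K ⊆ {0,…,n−1} with |K| = k such that c(j,a) = 0 for all j ∈ K and all a, then c is identically zero. -/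
/-!
Fix a sub-packet index `a`. Node `j = i·u + g` is assigned the evaluation point
`μ_j = θ^g · λ_{i,a_i}`, and the `r` parity checks at `a` say `∑_j μ_j^t c(j, a) = 0` for `t < r`.
The points `μ_j` are pairwise distinct: raising to the `u`-th power kills `θ^g` and leaves
`ξ^(u·(i·s̄ + a_i))` with exponent below `n·s̄ ≤ ord ξ`, which recovers `i` and `a_i`, and then `g`.
If `c(·, a)` vanishes on `k` nodes, the remaining `r` values satisfy a Vandermonde system of
size `r` with distinct nodes, hence vanish.
-/

open Finset

theorem sum_range_mul_eq_sum_sum {M : Type*} [AddCommMonoid M] (f : ℕ → M) (m u : ℕ) :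
    ∑ j ∈ range (m * u), f j = ∑ i ∈ range m, ∑ g ∈ range u, f (i * u + g) := by
  simp only [← Fin.sum_univ_eq_sum_range, ← Fintype.sum_prod_type']
  refine (Fintype.sum_equiv finProdFinEquiv _ _ fun p => ?_).symm
  simp only [finProdFinEquiv, Equiv.coe_fn_mk]
  ring_nf

section Vandermonde

variable {ι R : Type*} [CommRing R] [IsDomain R] {μ v : ι → R}

theorem Finset.eq_zero_of_forall_sum_pow_mul_eq_zero {S : Finset ι} (hμ : Set.InjOn μ S)
    (h : ∀ t < #S, ∑ x ∈ S, μ x ^ t * v x = 0) : ∀ x ∈ S, v x = 0 := by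
  let e := S.equivFin
  have hv : (fun i => v (e.symm i)) = 0 := by
    refine Matrix.eq_zero_of_forall_pow_sum_mul_pow_eq_zero (f := fun i => μ (e.symm i))
      (fun i j hij => e.symm.injective (Subtype.ext (hμ (e.symm i).2 (e.symm j).2 hij)))
      fun t => ?_
    rw [← h t t.2, ← S.sum_coe_sort]
    exact Fintype.sum_equiv e.symm _ _ fun i => mul_comm _ _
  intro x hx
  simpa using congrFun hv (e ⟨x, hx⟩)

theorem Finset.eq_zero_of_forall_sum_pow_mul_eq_zero_of_eqOn_zero [DecidableEq ι]
    {T K : Finset ι} (hμ : Set.InjOn μ T) (hK : Set.EqOn v 0 K)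
    (h : ∀ t < #(T \ K), ∑ x ∈ T, μ x ^ t * v x = 0) : ∀ x ∈ T, v x = 0 := by
  have hsum : ∀ t, ∑ x ∈ T \ K, μ x ^ t * v x = ∑ x ∈ T, μ x ^ t * v x := fun t =>
    sum_subset sdiff_subset fun x hxT hx => by
      rw [hK (by simpa [hxT] using hx : x ∈ K), Pi.zero_apply, mul_zero]
  intro x hxT
  by_cases hxK : x ∈ K
  · exact hK hxK
  · exact eq_zero_of_forall_sum_pow_mul_eq_zero (hμ.mono (by simp))
      (fun t ht => (hsum t).trans (h t ht)) x (mem_sdiff.mpr ⟨hxT, hxK⟩)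

end Vandermonde

theorem pow_mul_pow_injOn {M : Type*} [CommMonoid M] {θ ξ : M} {B : ℕ}
    (h : orderOf θ * B ≤ orderOf ξ) :
    Set.InjOn (fun p : ℕ × ℕ => θ ^ p.1 * ξ ^ p.2) (Set.Iio (orderOf θ) ×ˢ Set.Iio B) := by
  rintro ⟨g, e⟩ ⟨hg, he⟩ ⟨g', e'⟩ ⟨hg', he'⟩ heq
  simp only [Set.mem_Iio] at hg he hg' he' heq
  set u := orderOf θ
  have hu : 0 < u := by omega
  have hθu : ∀ g, θ ^ (g * u) = 1 := fun g => by rw [pow_mul', pow_orderOf_eq_one, one_pow]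
  have hξu : ξ ^ (e * u) = ξ ^ (e' * u) := by
    simpa only [mul_pow, ← pow_mul, hθu, one_mul] using congrArg (· ^ u) heq
  have hlt : ∀ e < B, e * u < orderOf ξ := fun e he => by nlinarith
  obtain rfl : e = e' :=
    Nat.eq_of_mul_eq_mul_right hu (pow_injOn_Iio_orderOf (hlt e he) (hlt e' he') hξu)
  have hξ : IsOfFinOrder ξ := orderOf_pos_iff.mp (by nlinarith)
  have hθg : θ ^ g = θ ^ g' := ((hξ.isUnit.pow e).mul_left_inj).mp heq
  exact Prod.ext (pow_injOn_Iio_orderOf hg hg' hθg) rfl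

/-- `ξ ^ rackExponent s̄ a i` is the paper's `λ_{i,a_i}`. -/
def rackExponent (sbar a i : ℕ) : ℕ := i * sbar + a / sbar ^ i % sbar

theorem rackExponent_div {sbar : ℕ} (hs : 0 < sbar) (a i : ℕ) :
    rackExponent sbar a i / sbar = i := by
  rw [rackExponent, add_comm, Nat.add_mul_div_right _ _ hs, Nat.div_eq_of_lt (Nat.mod_lt _ hs),
    zero_add]

theorem rackExponent_lt {sbar m i : ℕ} (hs : 0 < sbar) (a : ℕ) (hi : i < m) :
    rackExponent sbar a i < m * sbar := by
  have := Nat.mod_lt (a / sbar ^ i) hs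
  unfold rackExponent
  nlinarith

section NodePoint

variable {M : Type*} [CommMonoid M]

def nodePoint (θ ξ : M) (u sbar a j : ℕ) : M := θ ^ (j % u) * ξ ^ rackExponent sbar a (j / u)

theorem nodePoint_pow (θ ξ : M) {u g : ℕ} (sbar a i t : ℕ) (hg : g < u) :
    nodePoint θ ξ u sbar a (i * u + g) ^ t = θ ^ (g * t) * (ξ ^ rackExponent sbar a i) ^ t := by
  have hu : 0 < u := by omega
  rw [nodePoint, add_comm, Nat.add_mul_div_right _ _ hu, Nat.add_mul_mod_self_right,
    Nat.div_eq_of_lt hg, Nat.mod_eq_of_lt hg, zero_add, mul_pow, pow_mul]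

theorem nodePoint_injOn {θ ξ : M} {u sbar m : ℕ} (a : ℕ) (hθ : orderOf θ = u) (hs : 0 < sbar)
    (hξ : u * (m * sbar) ≤ orderOf ξ) :
    Set.InjOn (nodePoint θ ξ u sbar a) (Set.Iio (m * u)) := by
  subst hθ
  intro j hj j' hj' heq
  have hu : 0 < orderOf θ := Nat.pos_of_mul_pos_left (pos_of_gt hj)
  have hmem : ∀ j ∈ Set.Iio (m * orderOf θ), (j % orderOf θ, rackExponent sbar a (j / orderOf θ))
      ∈ Set.Iio (orderOf θ) ×ˢ Set.Iio (m * sbar) := fun j hj =>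
    ⟨Nat.mod_lt j hu, rackExponent_lt hs a (Nat.div_lt_of_lt_mul (by rwa [mul_comm]))⟩
  obtain ⟨hmod, hexp⟩ := Prod.mk.inj (pow_mul_pow_injOn hξ (hmem j hj) (hmem j' hj') heq)
  have hdiv : j / orderOf θ = j' / orderOf θ := by
    rw [← rackExponent_div hs a (j / orderOf θ), ← rackExponent_div hs a (j' / orderOf θ), hexp]
  rw [← Nat.div_add_mod j (orderOf θ), ← Nat.div_add_mod j' (orderOf θ), hdiv, hmod]

end NodePoint

theorem stmt9_general {𝔽 : Type*} [Field 𝔽] [Fintype 𝔽]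
    (nbar u sbar k n r : ℕ)
    (hsbar : 0 < sbar)
    (hn : n = nbar * u) (hr : r = n - k)
    (hcard : n * sbar + 1 ≤ Fintype.card 𝔽)
    (ξ θ : 𝔽) (hξ : orderOf ξ = Fintype.card 𝔽 - 1) (hθ : orderOf θ = u)
    (c : ℕ → ℕ → 𝔽)
    (hc : ∀ t < r, ∀ a < sbar ^ nbar,
      ∑ i ∈ Finset.range nbar, ∑ g ∈ Finset.range u,
        θ ^ (g * t) * (ξ ^ (i * sbar + a / sbar ^ i % sbar)) ^ t * c (i * u + g) a = 0)
    (K : Finset ℕ) (hK : K ⊆ Finset.range n) (hKcard : K.card = k)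
    (hzero : ∀ j ∈ K, ∀ a < sbar ^ nbar, c j a = 0) :
    ∀ j < n, ∀ a < sbar ^ nbar, c j a = 0 := by
  intro j hj a ha
  subst hn hr
  have hinj : Set.InjOn (nodePoint θ ξ u sbar a) (range (nbar * u)) := by
    rw [coe_range]
    refine nodePoint_injOn a hθ hsbar ?_
    have : u * (nbar * sbar) = nbar * u * sbar := by ring
    omega
  have hchecks : ∀ t < #(range (nbar * u) \ K),
      ∑ j ∈ range (nbar * u), nodePoint θ ξ u sbar a j ^ t * c j a = 0 := by
    intro t ht
    rw [card_sdiff_of_subset hK, card_range, hKcard] at ht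
    rw [sum_range_mul_eq_sum_sum, ← hc t ht a ha]
    exact sum_congr rfl fun i _ => sum_congr rfl fun g hg => by
      rw [nodePoint_pow θ ξ sbar a i t (mem_range.mp hg), rackExponent]
  exact eq_zero_of_forall_sum_pow_mul_eq_zero_of_eqOn_zero hinj (fun x hx => hzero x hx a ha)
    hchecks j (mem_range.mpr hj)

/-- **MDS property of the array code `C`** constructed in equations (6)–(8) of the
paper: a codeword of the code of length `n = nbar·u` and sub-packetization `sbar^nbar`
(defined by the parity-check equations below, where `a_i = a / sbar^i % sbar` is the
`i`-th `sbar`-ary digit of `a`) which vanishes on some `k` nodes is identically zero. -/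
theorem stmt9 {𝔽 : Type*} [Field 𝔽] [Fintype 𝔽]
    (nbar u sbar k n r : ℕ)
    (hnbar : 0 < nbar) (hu : 0 < u) (hsbar : 0 < sbar) (hk : 0 < k)
    (hn : n = nbar * u) (hkn : k < n) (hr : r = n - k)
    (hcard : n * sbar + 1 ≤ Fintype.card 𝔽) (hdvd : u ∣ Fintype.card 𝔽 - 1)
    (ξ θ : 𝔽) (hξ : orderOf ξ = Fintype.card 𝔽 - 1) (hθ : orderOf θ = u)
    (c : ℕ → ℕ → 𝔽)
    (hc : ∀ t < r, ∀ a < sbar ^ nbar,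
      ∑ i ∈ Finset.range nbar, ∑ g ∈ Finset.range u,
        θ ^ (g * t) * (ξ ^ (i * sbar + a / sbar ^ i % sbar)) ^ t * c (i * u + g) a = 0)
    (K : Finset ℕ) (hK : K ⊆ Finset.range n) (hKcard : K.card = k)
    (hzero : ∀ j ∈ K, ∀ a < sbar ^ nbar, c j a = 0) :
    ∀ j < n, ∀ a < sbar ^ nbar, c j a = 0 :=
  stmt9_general nbar u sbar k n r hsbar hn hr hcard ξ θ hξ hθ c hc K hK hKcard hzero
end

section
/- Fix p ∈ {0,…,h̄−1} and assume 1 ≤ b ≤ u − v. Let c and c' be two codewords of C̃ such that H_{i_p,j}(a,m)[c] = H_{i_p,j}(a,m)[c'] for every helper rack j ∈ R, every m ∈ {0,…,b−1} and every a ∈ {0,…,s̄^n̄ − 1}. Then: (i) ∑_{g=0}^{u−1} θ^{g·m}·c(i_p·u+g, a, (p+x) mod L) = ∑_{g=0}^{u−1} θ^{g·m}·c'(i_p·u+g, a, (p+x) mod L) for every x ∈ {0,…,s̄−1}, every m ∈ {0,…,b−1} and every a; and (ii) H_{i_p,i}(a,m)[c] = H_{i_p,i}(a,m)[c'] for every i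 ∈ F∖{i_p}, every m ∈ {0,…,b−1} and every a. In other words, in the download phase host rack i_p can recover these quantities from the symbols H_{i_p,j}(a,m) downloaded from the d̄ helper racks. -/
/-- Replace the `i`-th digit of the `s`-ary expansion of `a` by `x`
(the paper's notation `a(i, x)`). -/
def replaceDigit (s a i x : ℕ) : ℕ := a - a / s ^ i % s * s ^ i + x * s ^ i

/-- The combined symbol `H_{i_p, j}(a, m)[c]` of the paper:
`∑_{x=0}^{sbar−1} ∑_{g=0}^{u−1} θ^{g·m} · c(j·u+g, a(i_p, a_{i_p} ⊕ x), (p+x) mod L)`,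
where `ip` is the rack index `i_p`, `⊕` denotes addition modulo `sbar`, and the layer
index is taken modulo `L`. -/
def Hval {𝔽 : Type*} [Field 𝔽] (θ : 𝔽) (sbar u L ip p j m : ℕ)
    (c : ℕ → ℕ → ℕ → 𝔽) (a : ℕ) : 𝔽 :=
  ∑ x ∈ Finset.range sbar, ∑ g ∈ Finset.range u,
    θ ^ (g * m) *
      c (j * u + g) (replaceDigit sbar a ip ((a / sbar ^ ip % sbar + x) % sbar))
        ((p + x) % L)

/-!
Put `e = c - c'`, again a codeword of `C̃`. Fix `m < b` and `a`, and add up the parity checks of `e`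
at the `sbar` points `a(i_p, a_{i_p} ⊕ x)` and layers `(p + x) mod L`. These points differ only in
the digit of rack `i_p`, so a rack `i ≠ i_p` contributes `λ_{i,a_i}^t · H_{i_p,i}(a,m)[e]`, while
rack `i_p` contributes one term per `x`, with evaluation point `λ_{i_p, a_{i_p} ⊕ x}`. The helper
symbols vanish by hypothesis, which leaves `(nbar - dbar - 1) + sbar = nbar - kbar` unknowns with
pairwise distinct points. For the checks `t = ℓ u + m`, `ℓ < nbar - kbar` (all `< r` because
`m < u - v`) the coefficients `θ^{g t} = θ^{g m}` do not depend on `ℓ`, so these checks form a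
nonsingular Vandermonde system in the `u`-th powers of the points, and all unknowns vanish.
Part (i) follows because every `a` has the form `a'(i_p, a'_{i_p} ⊕ x)`.
-/

open Finset

theorem Finset.eq_zero_of_forall_sum_mul_pow_eq_zero {R ι : Type*} [CommRing R] [IsDomain R]
    (T : Finset ι) {f v : ι → R} (hf : Set.InjOn f T)
    (hfv : ∀ ℓ < #T, ∑ j ∈ T, v j * f j ^ ℓ = 0) : ∀ j ∈ T, v j = 0 := by
  set σ : Fin #T ≃ T := T.equivFin.symm
  have hv : (fun k => v (σ k)) = 0 := by
    refine Matrix.eq_zero_of_forall_pow_sum_mul_pow_eq_zero (f := fun k => f (σ k))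
      (fun k k' h => σ.injective (Subtype.ext (hf (σ k).2 (σ k').2 h))) fun ℓ => ?_
    rw [σ.sum_comp (fun j : T => v j * f j ^ (ℓ : ℕ)),
      T.sum_coe_sort (fun j => v j * f j ^ (ℓ : ℕ))]
    exact hfv ℓ ℓ.2
  intro j hj
  simpa [σ] using congrFun hv (σ.symm ⟨j, hj⟩)

theorem Finset.eq_zero_of_forall_sum_mul_pow_mul_add_eq_zero {R ι : Type*} [CommRing R]
    [IsDomain R] (T : Finset ι) {f v : ι → R} {u m : ℕ} (hf0 : ∀ j ∈ T, f j ≠ 0)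
    (hf : Set.InjOn (f · ^ u) T) (hfv : ∀ ℓ < #T, ∑ j ∈ T, v j * f j ^ (ℓ * u + m) = 0) :
    ∀ j ∈ T, v j = 0 := by
  have hvm := T.eq_zero_of_forall_sum_mul_pow_eq_zero (v := fun j => v j * f j ^ m) hf
    fun ℓ hℓ => by
      rw [← hfv ℓ hℓ]
      refine sum_congr rfl fun j _ => ?_
      ring
  exact fun j hj => (mul_eq_zero.mp (hvm j hj)).resolve_right (pow_ne_zero _ (hf0 j hj))

lemma injOn_pow_pow_of_lt {M ι : Type*} [Monoid M] {ξ : M} {E : ι → ℕ} {T : Set ι} {N u : ℕ}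
    (hu : 0 < u) (hE : Set.InjOn E T) (hEN : ∀ τ ∈ T, E τ < N) (hN : N * u ≤ orderOf ξ) :
    Set.InjOn (fun τ => (ξ ^ E τ) ^ u) T := by
  intro τ hτ τ' hτ' h
  have hlt : ∀ τ ∈ T, E τ * u < orderOf ξ := fun τ hτ =>
    (Nat.mul_lt_mul_of_pos_right (hEN τ hτ) hu).trans_le hN
  simp only [← pow_mul] at h
  exact hE hτ hτ' (Nat.eq_of_mul_eq_mul_right hu (pow_injOn_Iio_orderOf (hlt τ hτ) (hlt τ' hτ') h))

lemma Nat.eq_of_mul_add_eq_mul_add {s i j x y : ℕ} (hx : x < s) (hy : y < s)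
    (h : i * s + x = j * s + y) : i = j := by
  have := congrArg (· / s) h
  simp only [mul_comm _ s, Nat.mul_add_div (by omega : 0 < s), Nat.div_eq_of_lt hx,
    Nat.div_eq_of_lt hy] at this
  omega

section Digits

variable {s a i j x y n : ℕ}

lemma replaceDigit_eq (s a i x : ℕ) :
    replaceDigit s a i x = a % s ^ i + s ^ i * (x + s * (a / s ^ (i + 1))) := by
  have hlow : a % s ^ (i + 1) = a % s ^ i + s ^ i * (a / s ^ i % s) := Nat.mod_pow_succ
  have hsplit := Nat.div_add_mod a (s ^ (i + 1))
  have hle : a / s ^ i % s * s ^ i ≤ a := (Nat.mul_le_mul_right _ (Nat.mod_le _ _)).trans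
    (Nat.div_mul_le_self a _)
  rw [pow_succ, mul_comm (s ^ i) (a / s ^ i % s)] at hlow
  rw [pow_succ] at hsplit ⊢
  unfold replaceDigit
  rw [mul_add, mul_comm (s ^ i) x, ← mul_assoc]
  omega

lemma replaceDigit_mod_pow (s a i x : ℕ) : replaceDigit s a i x % s ^ i = a % s ^ i := by
  rw [replaceDigit_eq, Nat.add_mul_mod_self_left, Nat.mod_mod]

lemma replaceDigit_div_pow (hx : x < s) :
    replaceDigit s a i x / s ^ i = x + s * (a / s ^ (i + 1)) := by
  have hs : 0 < s ^ i := pow_pos (by omega) i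
  rw [replaceDigit_eq, Nat.add_mul_div_left _ _ hs, Nat.div_eq_of_lt (Nat.mod_lt _ hs), zero_add]

lemma digit_replaceDigit_self (hx : x < s) : replaceDigit s a i x / s ^ i % s = x := by
  rw [replaceDigit_div_pow hx, Nat.add_mul_mod_self_left, Nat.mod_eq_of_lt hx]

lemma replaceDigit_div_pow_succ (hx : x < s) :
    replaceDigit s a i x / s ^ (i + 1) = a / s ^ (i + 1) := by
  rw [pow_succ, ← Nat.div_div_eq_div_mul, replaceDigit_div_pow hx,
    Nat.add_mul_div_left _ _ (by omega), Nat.div_eq_of_lt hx, zero_add, pow_succ]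

lemma digit_replaceDigit_of_ne (hx : x < s) (hji : j ≠ i) :
    replaceDigit s a i x / s ^ j % s = a / s ^ j % s := by
  rcases Nat.lt_or_gt_of_ne hji with hji | hji
  · rw [← Nat.mod_mul_right_div_self, ← Nat.mod_mul_right_div_self a, ← pow_succ,
      ← Nat.mod_mod_of_dvd _ (pow_dvd_pow s hji), replaceDigit_mod_pow,
      Nat.mod_mod_of_dvd _ (pow_dvd_pow s hji)]
  · obtain ⟨k, rfl⟩ := Nat.exists_eq_add_of_lt hji
    rw [add_right_comm, pow_add, ← Nat.div_div_eq_div_mul, ← Nat.div_div_eq_div_mul,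
      replaceDigit_div_pow_succ hx]

lemma replaceDigit_lt (hx : x < s) (hi : i < n) (ha : a < s ^ n) :
    replaceDigit s a i x < s ^ n := by
  have hs : 0 < s ^ (i + 1) := pow_pos (by omega) _
  have hn : s ^ n = s ^ (n - (i + 1)) * s ^ (i + 1) := by rw [← pow_add]; congr 1; omega
  rw [hn, ← Nat.div_lt_iff_lt_mul hs, replaceDigit_div_pow_succ hx, Nat.div_lt_iff_lt_mul hs, ← hn]
  exact ha

lemma replaceDigit_replaceDigit (hx : x < s) :
    replaceDigit s (replaceDigit s a i x) i y = replaceDigit s a i y := by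
  rw [replaceDigit_eq s (replaceDigit s a i x), replaceDigit_div_pow_succ hx, replaceDigit_mod_pow,
    ← replaceDigit_eq]

lemma replaceDigit_digit (s a i : ℕ) : replaceDigit s a i (a / s ^ i % s) = a := by
  have hle : a / s ^ i % s * s ^ i ≤ a := (Nat.mul_le_mul_right _ (Nat.mod_le _ _)).trans
    (Nat.div_mul_le_self a _)
  unfold replaceDigit
  omega

lemma exists_replaceDigit_add_eq (hx : x < s) (hi : i < n) (ha : a < s ^ n) :
    ∃ a' < s ^ n, replaceDigit s a' i ((a' / s ^ i % s + x) % s) = a := by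
  have hs : 0 < s := by omega
  refine ⟨replaceDigit s a i ((a / s ^ i % s + (s - x)) % s),
    replaceDigit_lt (Nat.mod_lt _ hs) hi ha, ?_⟩
  rw [digit_replaceDigit_self (Nat.mod_lt _ hs), Nat.mod_add_mod _ s x,
    show a / s ^ i % s + (s - x) + x = a / s ^ i % s + s by omega, Nat.add_mod_right,
    Nat.mod_eq_of_lt (Nat.mod_lt _ hs), replaceDigit_replaceDigit (Nat.mod_lt _ hs),
    replaceDigit_digit]

end Digits

section StackedCode

variable {𝔽 : Type*} [Field 𝔽]

def rackSum (θ : 𝔽) (u m : ℕ) (c : ℕ → ℕ → ℕ → 𝔽) (i a y : ℕ) : 𝔽 :=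
  ∑ g ∈ range u, θ ^ (g * m) * c (i * u + g) a y

-- The code `C̃`, with `λ_{i,j} = ξ ^ (i * sbar + j)`.
def IsStackedCodeword (θ ξ : 𝔽) (nbar u sbar r L : ℕ) (c : ℕ → ℕ → ℕ → 𝔽) : Prop :=
  ∀ t < r, ∀ a < sbar ^ nbar, ∀ y < L,
    ∑ i ∈ range nbar, ∑ g ∈ range u,
      θ ^ (g * t) * (ξ ^ (i * sbar + a / sbar ^ i % sbar)) ^ t * c (i * u + g) a y = 0

variable {θ ξ : 𝔽} {nbar u sbar r L : ℕ} {c c' : ℕ → ℕ → ℕ → 𝔽}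

lemma rackSum_sub (θ : 𝔽) (u m : ℕ) (c c' : ℕ → ℕ → ℕ → 𝔽) (i a y : ℕ) :
    rackSum θ u m (c - c') i a y = rackSum θ u m c i a y - rackSum θ u m c' i a y := by
  simp only [rackSum, Pi.sub_apply, mul_sub, sum_sub_distrib]

lemma rackSum_mul_add (hθ : θ ^ u = 1) (ℓ m : ℕ) (c : ℕ → ℕ → ℕ → 𝔽) (i a y : ℕ) :
    rackSum θ u (ℓ * u + m) c i a y = rackSum θ u m c i a y := by
  refine sum_congr rfl fun g _ => ?_
  rw [show g * (ℓ * u + m) = u * (g * ℓ) + g * m by ring, pow_add, pow_mul, hθ, one_pow, one_mul]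

lemma Hval_eq_sum_rackSum (θ : 𝔽) (sbar u L ip p j m : ℕ) (c : ℕ → ℕ → ℕ → 𝔽) (a : ℕ) :
    Hval θ sbar u L ip p j m c a = ∑ x ∈ range sbar,
      rackSum θ u m c j (replaceDigit sbar a ip ((a / sbar ^ ip % sbar + x) % sbar))
        ((p + x) % L) :=
  rfl

lemma Hval_sub (θ : 𝔽) (sbar u L ip p j m : ℕ) (c c' : ℕ → ℕ → ℕ → 𝔽) (a : ℕ) :
    Hval θ sbar u L ip p j m (c - c') a
      = Hval θ sbar u L ip p j m c a - Hval θ sbar u L ip p j m c' a := by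
  simp only [Hval_eq_sum_rackSum, rackSum_sub, sum_sub_distrib]

lemma Hval_mul_add (hθ : θ ^ u = 1) (sbar L ip p j ℓ m : ℕ) (c : ℕ → ℕ → ℕ → 𝔽) (a : ℕ) :
    Hval θ sbar u L ip p j (ℓ * u + m) c a = Hval θ sbar u L ip p j m c a := by
  simp only [Hval_eq_sum_rackSum, rackSum_mul_add hθ]

-- The exponent of `ξ` in the evaluation point of each unknown: `λ_{i, a_i}` for a rack `i`,
-- `λ_{ip, a_ip ⊕ x}` for a shift `x`.
def evalExponent (s a ip : ℕ) : ℕ ⊕ ℕ → ℕ :=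
  Sum.elim (fun i => i * s + a / s ^ i % s) fun x => ip * s + (a / s ^ ip % s + x) % s

lemma evalExponent_lt {s a ip n : ℕ} (hs : 0 < s) (hip : ip < n) :
    ∀ τ ∈ ((range n).erase ip).disjSum (range s), evalExponent s a ip τ < n * s := by
  have hlt : ∀ {i x}, i < n → x < s → i * s + x < n * s := fun hi hx => by nlinarith
  rintro (i | x) hτ
  · simp only [inl_mem_disjSum, mem_erase, mem_range] at hτ
    exact hlt hτ.2 (Nat.mod_lt _ hs)
  · exact hlt hip (Nat.mod_lt _ hs)

lemma evalExponent_injOn {s a ip n : ℕ} (hs : 0 < s) :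
    Set.InjOn (evalExponent s a ip) (((range n).erase ip).disjSum (range s)) := by
  rintro (i | x) hτ (i' | x') hτ' h <;>
    simp only [mem_coe, inl_mem_disjSum, inr_mem_disjSum, mem_erase, mem_range] at hτ hτ'
  · exact congrArg _ (Nat.eq_of_mul_add_eq_mul_add (Nat.mod_lt _ hs) (Nat.mod_lt _ hs) h)
  · exact absurd (Nat.eq_of_mul_add_eq_mul_add (Nat.mod_lt _ hs) (Nat.mod_lt _ hs) h) hτ.1
  · exact absurd (Nat.eq_of_mul_add_eq_mul_add (Nat.mod_lt _ hs) (Nat.mod_lt _ hs) h).symm hτ'.1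
  · have hmod : (a / s ^ ip % s + x) % s = (a / s ^ ip % s + x') % s := by
      simpa [evalExponent] using h
    exact congrArg _ ((Nat.ModEq.add_left_cancel' _ hmod).eq_of_lt_of_lt hτ hτ')

namespace IsStackedCodeword

lemma sub (hc : IsStackedCodeword θ ξ nbar u sbar r L c)
    (hc' : IsStackedCodeword θ ξ nbar u sbar r L c') :
    IsStackedCodeword θ ξ nbar u sbar r L (c - c') := fun t ht a ha y hy => by
  simp only [Pi.sub_apply, mul_sub, sum_sub_distrib, hc t ht a ha y hy, hc' t ht a ha y hy,
    sub_zero]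

lemma sum_rackSum_mul_pow_eq_zero (hc : IsStackedCodeword θ ξ nbar u sbar r L c)
    {t a y : ℕ} (ht : t < r) (ha : a < sbar ^ nbar) (hy : y < L) :
    ∑ i ∈ range nbar, rackSum θ u t c i a y * (ξ ^ (i * sbar + a / sbar ^ i % sbar)) ^ t = 0 := by
  rw [← hc t ht a ha y hy]
  refine sum_congr rfl fun i _ => ?_
  rw [rackSum, sum_mul]
  exact sum_congr rfl fun g _ => by ring

lemma sum_Hval_mul_pow_add_sum_rackSum_mul_pow_eq_zero
    (hc : IsStackedCodeword θ ξ nbar u sbar r L c) {ip p t a : ℕ} (hip : ip < nbar)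
    (hL : 0 < L) (ht : t < r) (ha : a < sbar ^ nbar) :
    ∑ i ∈ (range nbar).erase ip,
        Hval θ sbar u L ip p i t c a * (ξ ^ (i * sbar + a / sbar ^ i % sbar)) ^ t
      + ∑ x ∈ range sbar,
        rackSum θ u t c ip (replaceDigit sbar a ip ((a / sbar ^ ip % sbar + x) % sbar))
            ((p + x) % L)
          * (ξ ^ (ip * sbar + (a / sbar ^ ip % sbar + x) % sbar)) ^ t = 0 := by
  rcases Nat.eq_zero_or_pos sbar with rfl | hs
  · simp [Hval]
  set d := a / sbar ^ ip % sbar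
  set shift : ℕ → ℕ := fun x => replaceDigit sbar a ip ((d + x) % sbar)
  have hdigit : ∀ x, (d + x) % sbar < sbar := fun x => Nat.mod_lt _ hs
  have hchecks : ∑ x ∈ range sbar, ∑ i ∈ range nbar,
      rackSum θ u t c i (shift x) ((p + x) % L)
        * (ξ ^ (i * sbar + shift x / sbar ^ i % sbar)) ^ t = 0 :=
    sum_eq_zero fun x _ => hc.sum_rackSum_mul_pow_eq_zero ht
      (replaceDigit_lt (hdigit x) hip ha) (Nat.mod_lt _ hL)
  rw [sum_comm, ← add_sum_erase _ _ (mem_range.mpr hip), add_comm] at hchecks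
  convert hchecks using 2
  · refine sum_congr rfl fun i hi => ?_
    rw [Hval_eq_sum_rackSum, sum_mul]
    refine sum_congr rfl fun x _ => ?_
    rw [digit_replaceDigit_of_ne (hdigit x) (ne_of_mem_erase hi)]
  · refine sum_congr rfl fun x _ => ?_
    rw [digit_replaceDigit_self (hdigit x)]

lemma Hval_eq_zero_and_rackSum_eq_zero (hc : IsStackedCodeword θ ξ nbar u sbar r L c)
    (hu : 0 < u) (hL : 0 < L) (hθ : θ ^ u = 1) (hξ0 : ξ ≠ 0) (hξ : nbar * sbar * u ≤ orderOf ξ)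
    {R : Finset ℕ} {ip p m a : ℕ} (hip : ip < nbar) (hRn : ∀ j ∈ R, j < nbar) (hipR : ip ∉ R)
    (ha : a < sbar ^ nbar) (hr : ∀ ℓ < nbar - (#R + 1) + sbar, ℓ * u + m < r)
    (hH : ∀ j ∈ R, Hval θ sbar u L ip p j m c a = 0) :
    (∀ i < nbar, i ≠ ip → i ∉ R → Hval θ sbar u L ip p i m c a = 0)
    ∧ ∀ x < sbar, rackSum θ u m c ip
        (replaceDigit sbar a ip ((a / sbar ^ ip % sbar + x) % sbar)) ((p + x) % L) = 0 := by
  classical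
  rcases Nat.eq_zero_or_pos sbar with rfl | hs
  · simp [Hval]
  let T : Finset (ℕ ⊕ ℕ) := (range nbar \ insert ip R).disjSum (range sbar)
  let w : ℕ ⊕ ℕ → 𝔽 := Sum.elim (fun i => Hval θ sbar u L ip p i m c a) fun x =>
    rackSum θ u m c ip (replaceDigit sbar a ip ((a / sbar ^ ip % sbar + x) % sbar)) ((p + x) % L)
  have hracks : range nbar \ insert ip R ⊆ (range nbar).erase ip := fun i hi => by
    simp only [mem_sdiff, mem_insert, mem_range, not_or] at hi
    exact mem_erase.mpr ⟨hi.2.1, mem_range.mpr hi.1⟩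
  have hcard : #T = nbar - (#R + 1) + sbar := by
    have hsub : insert ip R ⊆ range nbar := insert_subset (mem_range.mpr hip)
      fun j hj => mem_range.mpr (hRn j hj)
    rw [card_disjSum, card_sdiff_of_subset hsub, card_insert_of_notMem hipR, card_range,
      card_range]
  have hTsub : (T : Set (ℕ ⊕ ℕ)) ⊆ ((range nbar).erase ip).disjSum (range sbar) :=
    coe_subset.mpr (disjSum_mono hracks subset_rfl)
  have hinj : Set.InjOn (fun τ => (ξ ^ evalExponent sbar a ip τ) ^ u) T :=
    injOn_pow_pow_of_lt hu ((evalExponent_injOn hs).mono hTsub)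
      (fun τ hτ => evalExponent_lt hs hip τ (hTsub hτ)) hξ
  have hsys : ∀ ℓ < #T, ∑ τ ∈ T, w τ * (ξ ^ evalExponent sbar a ip τ) ^ (ℓ * u + m) = 0 := by
    intro ℓ hℓ
    have hcheck := hc.sum_Hval_mul_pow_add_sum_rackSum_mul_pow_eq_zero (p := p) hip hL
      (hr ℓ (hcard ▸ hℓ)) ha
    simp only [Hval_mul_add hθ, rackSum_mul_add hθ] at hcheck
    rw [sum_disjSum, ← hcheck]
    congr 1
    refine sum_subset hracks fun i hi hiT => ?_
    have hiR : i ∈ R := by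
      simp only [mem_erase, mem_sdiff, mem_insert, mem_range, not_or] at hi hiT
      tauto
    simp only [w, Sum.elim_inl, hH i hiR, zero_mul]
  have hw := T.eq_zero_of_forall_sum_mul_pow_mul_add_eq_zero (fun _ _ => pow_ne_zero _ hξ0)
    hinj hsys
  exact ⟨fun i hi hne hiR => hw (.inl i) (by simp [T, hi, hne, hiR]),
    fun x hx => hw (.inr x) (by simp [T, hx])⟩

end IsStackedCodeword

end StackedCode

theorem stmt11_general {𝔽 : Type*} [Field 𝔽] [Fintype 𝔽]
    (nbar u kbar hbar dbar δ v b : ℕ)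
    (hu : 0 < u) (hδ2 : δ ≤ hbar - 1)
    (hv : v < u) (hb2 : b ≤ u - v)
    (hd1 : kbar ≤ dbar) (hd2 : dbar ≤ nbar - hbar)
    (k n r sbar L : ℕ)
    (hk : k = kbar * u + v) (hn : n = nbar * u) (hr : r = n - k)
    (hsbar : sbar = dbar - kbar + 1) (hL : L = sbar + hbar - δ)
    (hcard : n * sbar + 1 ≤ Fintype.card 𝔽)
    (ξ θ : 𝔽) (hξ : orderOf ξ = Fintype.card 𝔽 - 1) (hθ : orderOf θ = u)
    -- the host racks `i₀ < i₁ < … < i_{hbar−1}`, given by `iF 0, …, iF (hbar−1)`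
    (iF : ℕ → ℕ) (hiF : StrictMonoOn iF (Set.Iio hbar)) (hiFn : ∀ q < hbar, iF q < nbar)
    -- the helper racks
    (R : Finset ℕ) (hR : R.card = dbar) (hRn : ∀ j ∈ R, j < nbar)
    (hRF : ∀ j ∈ R, ∀ q < hbar, j ≠ iF q)
    -- two codewords of the stacked MDS array code `C̃`
    (c c' : ℕ → ℕ → ℕ → 𝔽)
    (hc : ∀ t < r, ∀ a < sbar ^ nbar, ∀ y < L,
      ∑ i ∈ Finset.range nbar, ∑ g ∈ Finset.range u,
        θ ^ (g * t) * (ξ ^ (i * sbar + a / sbar ^ i % sbar)) ^ t * c (i * u + g) a y = 0)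
    (hc' : ∀ t < r, ∀ a < sbar ^ nbar, ∀ y < L,
      ∑ i ∈ Finset.range nbar, ∑ g ∈ Finset.range u,
        θ ^ (g * t) * (ξ ^ (i * sbar + a / sbar ^ i % sbar)) ^ t * c' (i * u + g) a y = 0)
    (p : ℕ) (hp : p < hbar)
    -- the downloaded symbols agree
    (hH : ∀ j ∈ R, ∀ m < b, ∀ a < sbar ^ nbar,
      Hval θ sbar u L (iF p) p j m c a = Hval θ sbar u L (iF p) p j m c' a) :
    (∀ x < sbar, ∀ m < b, ∀ a < sbar ^ nbar,
      ∑ g ∈ Finset.range u, θ ^ (g * m) * c (iF p * u + g) a ((p + x) % L)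
        = ∑ g ∈ Finset.range u, θ ^ (g * m) * c' (iF p * u + g) a ((p + x) % L))
    ∧ (∀ q < hbar, q ≠ p → ∀ m < b, ∀ a < sbar ^ nbar,
      Hval θ sbar u L (iF p) p (iF q) m c a = Hval θ sbar u L (iF p) p (iF q) m c' a) := by
  have hξ0 : ξ ≠ 0 := by
    rintro rfl
    have := Fintype.one_lt_card (α := 𝔽)
    rw [orderOf_zero] at hξ
    omega
  have hξn : nbar * sbar * u ≤ orderOf ξ := by rw [hξ, mul_right_comm, ← hn]; omega
  have hθu : θ ^ u = 1 := hθ ▸ pow_orderOf_eq_one θ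
  have hip : iF p < nbar := hiFn p hp
  have hipR : iF p ∉ R := fun h => hRF _ h p hp rfl
  have hchecks : ∀ m < b, ∀ ℓ < nbar - (#R + 1) + sbar, ℓ * u + m < r := by
    intro m hm ℓ hℓ
    have : (ℓ + 1) * u ≤ (nbar - kbar) * u := Nat.mul_le_mul_right _ (by omega)
    rw [add_one_mul, Nat.sub_mul] at this
    omega
  have hvanish (m : ℕ) (hm : m < b) (a : ℕ) (ha : a < sbar ^ nbar) :=
    (IsStackedCodeword.sub hc hc').Hval_eq_zero_and_rackSum_eq_zero hu (by omega) hθu hξ0 hξn hip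
      hRn hipR ha (hchecks m hm) fun j hj => by rw [Hval_sub, hH j hj m hm a ha, sub_self]
  refine ⟨fun x hx m hm a ha => ?_, fun q hq hqp m hm a ha => ?_⟩
  · obtain ⟨a', ha', rfl⟩ := exists_replaceDigit_add_eq hx hip ha
    exact sub_eq_zero.mp ((rackSum_sub ..).symm.trans ((hvanish m hm a' ha').2 x hx))
  · have hne : iF q ≠ iF p := fun h => hqp (hiF.injOn hq hp h)
    exact sub_eq_zero.mp ((Hval_sub ..).symm.trans
      ((hvanish m hm a ha).1 (iF q) (hiFn q hq) hne fun h => hRF _ h q hq rfl))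

/-- **Lemma 1(1) of the paper** (download phase, case `1 ≤ b ≤ u − v`):
if two codewords `c, c'` of the stacked code `C̃` (arrays
`c : node × index × layer → 𝔽` satisfying the parity-check equations) give the same
downloaded symbols `H_{i_p,j}(a,m)` for all helper racks `j ∈ R`, all `m < b` and all
`a < sbar^nbar`, then they agree on (i) the combinations
`∑_g θ^{g·m}·c(i_p·u+g, a, (p+x) mod L)` for `x < sbar`, and
(ii) the symbols `H_{i_p,i}(a,m)` for every other host rack `i ∈ F∖{i_p}`. -/
theorem stmt11 {𝔽 : Type*} [Field 𝔽] [Fintype 𝔽]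
    (nbar u kbar hbar dbar δ v b : ℕ)
    (hnbar : 0 < nbar) (hu : 0 < u) (hkbar : 0 < kbar) (hhbar : 0 < hbar)
    (hδ1 : 1 ≤ δ) (hδ2 : δ ≤ hbar - 1)
    (hv : v < u) (hb1 : 1 ≤ b) (hb2 : b ≤ u - v)
    (hd1 : kbar ≤ dbar) (hd2 : dbar ≤ nbar - hbar) (hhn : hbar ≤ nbar)
    (k n r sbar L : ℕ)
    (hk : k = kbar * u + v) (hn : n = nbar * u) (hr : r = n - k)
    (hsbar : sbar = dbar - kbar + 1) (hL : L = sbar + hbar - δ)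
    (hcard : n * sbar + 1 ≤ Fintype.card 𝔽) (hdvd : u ∣ Fintype.card 𝔽 - 1)
    (ξ θ : 𝔽) (hξ : orderOf ξ = Fintype.card 𝔽 - 1) (hθ : orderOf θ = u)
    -- the host racks `i₀ < i₁ < … < i_{hbar−1}`, given by `iF 0, …, iF (hbar−1)`
    (iF : ℕ → ℕ) (hiF : StrictMonoOn iF (Set.Iio hbar)) (hiFn : ∀ q < hbar, iF q < nbar)
    -- the helper racks
    (R : Finset ℕ) (hR : R.card = dbar) (hRn : ∀ j ∈ R, j < nbar)
    (hRF : ∀ j ∈ R, ∀ q < hbar, j ≠ iF q)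
    -- two codewords of the stacked MDS array code `C̃`
    (c c' : ℕ → ℕ → ℕ → 𝔽)
    (hc : ∀ t < r, ∀ a < sbar ^ nbar, ∀ y < L,
      ∑ i ∈ Finset.range nbar, ∑ g ∈ Finset.range u,
        θ ^ (g * t) * (ξ ^ (i * sbar + a / sbar ^ i % sbar)) ^ t * c (i * u + g) a y = 0)
    (hc' : ∀ t < r, ∀ a < sbar ^ nbar, ∀ y < L,
      ∑ i ∈ Finset.range nbar, ∑ g ∈ Finset.range u,
        θ ^ (g * t) * (ξ ^ (i * sbar + a / sbar ^ i % sbar)) ^ t * c' (i * u + g) a y = 0)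
    (p : ℕ) (hp : p < hbar)
    -- the downloaded symbols agree
    (hH : ∀ j ∈ R, ∀ m < b, ∀ a < sbar ^ nbar,
      Hval θ sbar u L (iF p) p j m c a = Hval θ sbar u L (iF p) p j m c' a) :
    (∀ x < sbar, ∀ m < b, ∀ a < sbar ^ nbar,
      ∑ g ∈ Finset.range u, θ ^ (g * m) * c (iF p * u + g) a ((p + x) % L)
        = ∑ g ∈ Finset.range u, θ ^ (g * m) * c' (iF p * u + g) a ((p + x) % L))
    ∧ (∀ q < hbar, q ≠ p → ∀ m < b, ∀ a < sbar ^ nbar,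
      Hval θ sbar u L (iF p) p (iF q) m c a = Hval θ sbar u L (iF p) p (iF q) m c' a) :=
  stmt11_general nbar u kbar hbar dbar δ v b hu hδ2 hv hb2 hd1 hd2 k n r sbar L hk hn hr hsbar hL
    hcard ξ θ hξ hθ iF hiF hiFn R hR hRn hRF c c' hc hc' p hp hH
end

section
/- Fix p ∈ {0,…,h̄−1}, let S = S_{⌊p/(h̄−δ+1)⌋} be the group of host racks containing i_p, and assume 1 ≤ b ≤ u − v. Let c and c' be two codewords such that H_{i_p,j}(a,m)[c] = H_{i_p,j}(a,m)[c'] for every helper rack j ∈ R, every m ∈ {0,…,b−1}, and every a ∈ 𝔽₂^{n̄} with a|_S ∈ V₀. Then for every m ∈ {0,…,b−1} and every a ∈ 𝔽₂^{n̄} with a|_S ∈ V₀: (i) ∑_{g=0}^{u−1} θ^{g·m}·c(i_p·u+g, a) = ∑_{g=0}^{u−1} θ^{g·m}·c'(i_p·u+g, a) and ∑_{g=0}^{u−1} θ^{g·m}·c(i_p·u+g, a+e_{i_p}) = ∑_{g=0}^{u−1} θ^{g·m}·c'(i_p·u+g, a+e_{i_p}); and (ii) H_{i_p,i}(a,m)[c]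 = H_{i_p,i}(a,m)[c'] for every i ∈ F∖{i_p}. -/
/-- Flip the `i`-th coordinate of a binary vector (the paper's `a + e_i`). -/
def flipCoord (a : ℕ → ZMod 2) (i : ℕ) : ℕ → ZMod 2 :=
  Function.update a i (a i + 1)

/-- The combined symbol `H_{i',j'}(a,m)[c]` of the second construction:
`∑_{g=0}^{u−1} θ^{g·m}·c(j'·u+g, a) + ∑_{g=0}^{u−1} θ^{g·m}·c(j'·u+g, a+e_{i'})`. -/
def Hval2 {𝔽 : Type*} [Field 𝔽] (θ : 𝔽) (u i' j' m : ℕ)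
    (c : ℕ → (ℕ → ZMod 2) → 𝔽) (a : ℕ → ZMod 2) : 𝔽 :=
  (∑ g ∈ Finset.range u, θ ^ (g * m) * c (j' * u + g) a)
    + ∑ g ∈ Finset.range u, θ ^ (g * m) * c (j' * u + g) (flipCoord a i')

lemma vand_zero {𝔽 : Type*} [Field 𝔽] (s : Finset ℕ) (x w : ℕ → 𝔽)
    (hx : Set.InjOn x s) (h : ∀ t < s.card, ∑ e ∈ s, x e ^ t * w e = 0) :
    ∀ e ∈ s, w e = 0 := by
  classical
  have key : (fun i : Fin s.card => w (s.equivFin.symm i : ℕ)) = 0 := by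
    apply Matrix.eq_zero_of_forall_pow_sum_mul_pow_eq_zero
      (f := fun i : Fin s.card => x (s.equivFin.symm i : ℕ))
    · intro i j hij
      exact s.equivFin.symm.injective
        (Subtype.ext (hx (s.equivFin.symm i).2 (s.equivFin.symm j).2 hij))
    · intro t
      have h1 : ∑ i : Fin s.card,
          w (s.equivFin.symm i : ℕ) * x (s.equivFin.symm i : ℕ) ^ (t : ℕ)
          = ∑ e ∈ s, x e ^ (t : ℕ) * w e := by
        rw [← Finset.sum_coe_sort s (fun e => x e ^ (t : ℕ) * w e),
          ← Equiv.sum_comp s.equivFin.symm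
            (fun e : {e // e ∈ s} => x (e : ℕ) ^ (t : ℕ) * w (e : ℕ))]
        exact Finset.sum_congr rfl fun i _ => mul_comm _ _
      exact h1.trans (h t t.2)
  intro e he
  have := congrFun key (s.equivFin ⟨e, he⟩)
  simpa using this

/-- **Lemma 5(1) of the paper** (download phase of the second construction,
`dbar = kbar + 1`, case `1 ≤ b ≤ u − v`): if two codewords `c, c'` of the code over
`𝔽₂^{nbar}`-indexed columns give the same downloaded symbols `H_{i_p,j}(a,m)` for all
helper racks `j ∈ R`, all `m < b` and all `a` whose restriction to the group
`S = S_{⌊p/(hbar−δ+1)⌋}` of host racks containing `i_p` (in increasing order,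
i.e. `t ↦ a (iF (p/(hbar−δ+1)·(hbar−δ+1) + t))`) lies in the Hamming code `V₀`, then
they agree on (i) the combinations `∑_g θ^{g·m}·c(i_p·u+g, a)` and
`∑_g θ^{g·m}·c(i_p·u+g, a+e_{i_p})`, and (ii) the symbols `H_{i_p,i}(a,m)` for every
other host rack `i ∈ F∖{i_p}`, for all such `a` and all `m < b`. -/
theorem stmt15 {𝔽 : Type*} [Field 𝔽] [Fintype 𝔽]
    (nbar u kbar hbar dbar δ v b mbar : ℕ)
    (hnbar : 0 < nbar) (hu : 0 < u) (hkbar : 0 < kbar) (hhbar : 0 < hbar)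
    (hδ1 : 1 ≤ δ) (hδ2 : δ ≤ hbar - 1)
    (hv : v < u) (hb1 : 1 ≤ b) (hb2 : b ≤ u - v)
    (hmbar : hbar - δ + 2 = 2 ^ mbar) (hdvdh : (hbar - δ + 1) ∣ hbar)
    (hdbar : dbar = kbar + 1) (hd2 : dbar ≤ nbar - hbar) (hhn : hbar ≤ nbar)
    (k n r : ℕ)
    (hk : k = kbar * u + v) (hn : n = nbar * u) (hr : r = n - k)
    (hcard : 2 * n + 1 ≤ Fintype.card 𝔽) (hdvd : u ∣ Fintype.card 𝔽 - 1)
    (ξ θ : 𝔽) (hξ : orderOf ξ = Fintype.card 𝔽 - 1) (hθ : orderOf θ = u)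
    -- the host racks `i₀ < i₁ < … < i_{hbar−1}`, given by `iF 0, …, iF (hbar−1)`
    (iF : ℕ → ℕ) (hiF : StrictMonoOn iF (Set.Iio hbar)) (hiFn : ∀ q < hbar, iF q < nbar)
    -- the helper racks
    (R : Finset ℕ) (hR : R.card = dbar) (hRn : ∀ j ∈ R, j < nbar)
    (hRF : ∀ j ∈ R, ∀ q < hbar, j ≠ iF q)
    -- the Hamming code `V₀ ⊆ 𝔽₂^{hbar−δ+1}`: kernel of a matrix whose columns are
    -- the distinct nonzero vectors of `𝔽₂^{mbar}`
    (Hm : Matrix (Fin mbar) (Fin (hbar - δ + 1)) (ZMod 2))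
    (hHminj : Function.Injective fun j i => Hm i j)
    (hHmnz : ∀ j, (fun i => Hm i j) ≠ 0)
    (V₀ : Set (Fin (hbar - δ + 1) → ZMod 2)) (hV₀ : V₀ = {f | Hm.mulVec f = 0})
    -- two codewords of the MDS array code
    (c c' : ℕ → (ℕ → ZMod 2) → 𝔽)
    (hc : ∀ t < r, ∀ a : ℕ → ZMod 2,
      ∑ i ∈ Finset.range nbar, ∑ g ∈ Finset.range u,
        θ ^ (g * t) * (ξ ^ (2 * i + (a i).val)) ^ t * c (i * u + g) a = 0)
    (hc' : ∀ t < r, ∀ a : ℕ → ZMod 2,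
      ∑ i ∈ Finset.range nbar, ∑ g ∈ Finset.range u,
        θ ^ (g * t) * (ξ ^ (2 * i + (a i).val)) ^ t * c' (i * u + g) a = 0)
    (p : ℕ) (hp : p < hbar)
    -- the downloaded symbols agree
    (hH : ∀ j ∈ R, ∀ m < b, ∀ a : ℕ → ZMod 2,
      (fun t : Fin (hbar - δ + 1) =>
        a (iF (p / (hbar - δ + 1) * (hbar - δ + 1) + (t : ℕ)))) ∈ V₀ →
      Hval2 θ u (iF p) j m c a = Hval2 θ u (iF p) j m c' a) :
    (∀ m < b, ∀ a : ℕ → ZMod 2,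
      (fun t : Fin (hbar - δ + 1) =>
        a (iF (p / (hbar - δ + 1) * (hbar - δ + 1) + (t : ℕ)))) ∈ V₀ →
      (∑ g ∈ Finset.range u, θ ^ (g * m) * c (iF p * u + g) a
          = ∑ g ∈ Finset.range u, θ ^ (g * m) * c' (iF p * u + g) a)
      ∧ (∑ g ∈ Finset.range u, θ ^ (g * m) * c (iF p * u + g) (flipCoord a (iF p))
          = ∑ g ∈ Finset.range u, θ ^ (g * m) * c' (iF p * u + g) (flipCoord a (iF p))))
    ∧ (∀ q < hbar, q ≠ p → ∀ m < b, ∀ a : ℕ → ZMod 2,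
      (fun t : Fin (hbar - δ + 1) =>
        a (iF (p / (hbar - δ + 1) * (hbar - δ + 1) + (t : ℕ)))) ∈ V₀ →
      Hval2 θ u (iF p) (iF q) m c a = Hval2 θ u (iF p) (iF q) m c' a) := by
  classical
  have hipn : iF p < nbar := hiFn p hp
  have hipR : iF p ∉ R := fun hmem => hRF (iF p) hmem p hp rfl
  have hnk : kbar + 2 ≤ nbar := by omega
  have hθu : θ ^ u = 1 := by rw [← hθ]; exact pow_orderOf_eq_one θ
  have hnu1 : 1 ≤ nbar * u := Nat.mul_pos hnbar hu
  have hξ1 : ξ ^ (Fintype.card 𝔽 - 1) = 1 := by rw [← hξ]; exact pow_orderOf_eq_one ξ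
  have hξne : ξ ≠ 0 := by
    intro h0
    rw [h0, zero_pow (by omega : Fintype.card 𝔽 - 1 ≠ 0)] at hξ1
    exact one_ne_zero hξ1.symm
  have hupow : ∀ d1 d2 : ℕ, d1 < 2 * nbar → d2 < 2 * nbar →
      ξ ^ (u * d1) = ξ ^ (u * d2) → d1 = d2 := by
    intro d1 d2 h1 h2 he
    have hb : u * (2 * nbar) = 2 * (nbar * u) := by ring
    have hlt1 : u * d1 < orderOf ξ := by
      rw [hξ]
      have := (Nat.mul_lt_mul_left hu).mpr h1
      omega
    have hlt2 : u * d2 < orderOf ξ := by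
      rw [hξ]
      have := (Nat.mul_lt_mul_left hu).mpr h2
      omega
    have := pow_injOn_Iio_orderOf (x := ξ) (Set.mem_Iio.mpr hlt1) (Set.mem_Iio.mpr hlt2) he
    exact Nat.eq_of_mul_eq_mul_left hu this
  -- The key claim, proved via a square Vandermonde system
  have key : ∀ m < b, ∀ a : ℕ → ZMod 2,
      (fun t : Fin (hbar - δ + 1) =>
        a (iF (p / (hbar - δ + 1) * (hbar - δ + 1) + (t : ℕ)))) ∈ V₀ →
      (∑ g ∈ Finset.range u, θ ^ (g * m) * (c (iF p * u + g) a - c' (iF p * u + g) a) = 0)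
      ∧ (∑ g ∈ Finset.range u, θ ^ (g * m) *
          (c (iF p * u + g) (flipCoord a (iF p)) - c' (iF p * u + g) (flipCoord a (iF p))) = 0)
      ∧ ∀ i, i < nbar → i ∉ R → i ≠ iF p →
          (∑ g ∈ Finset.range u, θ ^ (g * m) * (c (i * u + g) a - c' (i * u + g) a))
          + (∑ g ∈ Finset.range u, θ ^ (g * m) *
              (c (i * u + g) (flipCoord a (iF p)) - c' (i * u + g) (flipCoord a (iF p)))) = 0 := by
    intro m hm a ha
    set ip := iF p with hip
    set a2 := flipCoord a ip with ha2def
    have ha2eq : ∀ i, i ≠ ip → a2 i = a i := by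
      intro i hi
      rw [ha2def]
      exact Function.update_of_ne hi _ a
    have ha2ip : a2 ip = a ip + 1 := Function.update_self _ _ _
    set f : ℕ → 𝔽 := fun i =>
      ∑ g ∈ Finset.range u, θ ^ (g * m) * (c (i * u + g) a - c' (i * u + g) a) with hf
    set f2 : ℕ → 𝔽 := fun i =>
      ∑ g ∈ Finset.range u, θ ^ (g * m) * (c (i * u + g) a2 - c' (i * u + g) a2) with hf2
    -- helper racks vanish
    have hRz : ∀ j ∈ R, f j + f2 j = 0 := by
      intro j hj
      have h := hH j hj m hm a ha
      simp only [Hval2] at h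
      rw [← ha2def] at h
      simp only [hf, hf2, mul_sub, Finset.sum_sub_distrib]
      linear_combination h
    -- parity check equations, reduced mod the order of θ
    have hper : ∀ (aa : ℕ → ZMod 2) (s : ℕ), s * u + m < r →
        ∑ i ∈ Finset.range nbar, (ξ ^ (2 * i + (aa i).val)) ^ (s * u + m) *
          (∑ g ∈ Finset.range u, θ ^ (g * m) * (c (i * u + g) aa - c' (i * u + g) aa)) = 0 := by
      intro aa s ht
      have h1 := hc (s * u + m) ht aa
      have h2 := hc' (s * u + m) ht aa
      have h3 : ∑ i ∈ Finset.range nbar, ∑ g ∈ Finset.range u,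
          θ ^ (g * (s * u + m)) * (ξ ^ (2 * i + (aa i).val)) ^ (s * u + m) *
            (c (i * u + g) aa - c' (i * u + g) aa) = 0 := by
        simp only [mul_sub, Finset.sum_sub_distrib]
        rw [h1, h2, sub_zero]
      refine Eq.trans ?_ h3
      refine Finset.sum_congr rfl fun i _ => ?_
      rw [Finset.mul_sum]
      refine Finset.sum_congr rfl fun g _ => ?_
      have hθg : θ ^ (g * (s * u + m)) = θ ^ (g * m) := by
        have he : g * (s * u + m) = u * (g * s) + g * m := by ring
        rw [he, pow_add, pow_mul, hθu, one_pow, one_mul]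
      rw [hθg]; ring
    -- index sets
    set I : Finset ℕ := (Finset.range nbar \ R).erase ip with hI
    have hsubR : R ⊆ Finset.range nbar := fun j hj => Finset.mem_range.mpr (hRn j hj)
    have hipmem : ip ∈ Finset.range nbar \ R :=
      Finset.mem_sdiff.mpr ⟨Finset.mem_range.mpr hipn, hipR⟩
    have hIcard : I.card = nbar - kbar - 2 := by
      rw [hI, Finset.card_erase_of_mem hipmem, Finset.card_sdiff_of_subset hsubR,
        Finset.card_range, hR, hdbar]
      omega
    have hInotip : ∀ i ∈ I, i ≠ ip := fun i hi => Finset.ne_of_mem_erase hi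
    have hImemlt : ∀ i ∈ I, i < nbar := by
      intro i hi
      have := Finset.mem_sdiff.mp (Finset.mem_of_mem_erase hi)
      exact Finset.mem_range.mp this.1
    set φ : ℕ → ℕ := fun i => 2 * i + (a i).val with hφ
    set e1 : ℕ := 2 * ip + (a ip).val with he1
    set e2 : ℕ := 2 * ip + (a2 ip).val with he2
    have hvlt : ∀ z : ZMod 2, z.val < 2 := fun z => ZMod.val_lt z
    have hhalf : ∀ i, φ i / 2 = i := by
      intro i
      simp only [hφ]
      have := hvlt (a i)
      omega
    have he1half : e1 / 2 = ip := by have := hvlt (a ip); omega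
    have he2half : e2 / 2 = ip := by have := hvlt (a2 ip); omega
    have he12 : e1 ≠ e2 := by
      have hz : ∀ z : ZMod 2, (z + 1).val ≠ z.val := by decide
      have h2 := hz (a ip)
      rw [ha2ip] at he2
      omega
    have hφinj : Set.InjOn φ I := by
      intro i _ j _ hij
      rw [← hhalf i, hij, hhalf j]
    have hφne : ∀ i ∈ I, φ i ≠ e1 ∧ φ i ≠ e2 := by
      intro i hi
      constructor
      · intro h; exact hInotip i hi (by rw [← hhalf i, h, he1half])
      · intro h; exact hInotip i hi (by rw [← hhalf i, h, he2half])
    set E : Finset ℕ := insert e1 (insert e2 (I.image φ)) with hE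
    have he1nm : e1 ∉ insert e2 (I.image φ) := by
      simp only [Finset.mem_insert, Finset.mem_image]
      rintro (h | ⟨i, hi, h⟩)
      · exact he12 h
      · exact (hφne i hi).1 h
    have he2nm : e2 ∉ I.image φ := by
      simp only [Finset.mem_image]
      rintro ⟨i, hi, h⟩
      exact (hφne i hi).2 h
    have hEcard : E.card = nbar - kbar := by
      rw [hE, Finset.card_insert_of_notMem he1nm, Finset.card_insert_of_notMem he2nm,
        Finset.card_image_of_injOn hφinj, hIcard]
      omega
    set x : ℕ → 𝔽 := fun e => ξ ^ (u * e) with hx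
    set W : ℕ → 𝔽 := fun e =>
      if e = e1 then ξ ^ (e1 * m) * f ip
      else if e = e2 then ξ ^ (e2 * m) * f2 ip
      else ξ ^ (e * m) * (f (e / 2) + f2 (e / 2)) with hW
    have hsum : ∀ t < E.card, ∑ e ∈ E, x e ^ t * W e = 0 := by
      intro s hs
      rw [hEcard] at hs
      have hter : s * u + m < r := by
        obtain ⟨N, hN1, hN2⟩ : ∃ N, nbar = kbar + N ∧ 2 ≤ N := ⟨nbar - kbar, by omega, by omega⟩
        have hsu : (s + 1) * u ≤ N * u := Nat.mul_le_mul_right u (by omega)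
        have hsu2 : (s + 1) * u = s * u + u := by ring
        have h0 : nbar * u = (kbar + N) * u := by rw [hN1]
        have h1 : (kbar + N) * u = kbar * u + N * u := by ring
        omega
      have hA : ∑ i ∈ Finset.range nbar, (ξ ^ (2 * i + (a i).val)) ^ (s * u + m) * f i = 0 :=
        hper a s hter
      have hB : ∑ i ∈ Finset.range nbar, (ξ ^ (2 * i + (a2 i).val)) ^ (s * u + m) * f2 i = 0 :=
        hper a2 s hter
      have hsplit : ∀ F : ℕ → 𝔽, ∑ i ∈ Finset.range nbar, F i
          = F ip + ∑ i ∈ I, F i + ∑ j ∈ R, F j := by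
        intro F
        have h1 : ∑ i ∈ Finset.range nbar \ R, F i + ∑ j ∈ R, F j
            = ∑ i ∈ Finset.range nbar, F i := Finset.sum_sdiff hsubR
        have h2 : ∑ i ∈ Finset.range nbar \ R, F i = F ip + ∑ i ∈ I, F i := by
          rw [← Finset.insert_erase hipmem, Finset.sum_insert (Finset.notMem_erase ip _), hI]
        rw [← h1, h2]
      rw [hsplit] at hA hB
      have hBI : ∑ i ∈ I, (ξ ^ (2 * i + (a2 i).val)) ^ (s * u + m) * f2 i
          = ∑ i ∈ I, (ξ ^ (2 * i + (a i).val)) ^ (s * u + m) * f2 i :=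
        Finset.sum_congr rfl fun i hi => by rw [ha2eq i (hInotip i hi)]
      have hBR : ∑ j ∈ R, (ξ ^ (2 * j + (a2 j).val)) ^ (s * u + m) * f2 j
          = ∑ j ∈ R, (ξ ^ (2 * j + (a j).val)) ^ (s * u + m) * f2 j :=
        Finset.sum_congr rfl fun j hj => by
          rw [ha2eq j (fun h => hRF j hj p hp (h.trans hip.symm ▸ rfl))]
      rw [hBI, hBR] at hB
      have hR0 : ∑ j ∈ R, ((ξ ^ (2 * j + (a j).val)) ^ (s * u + m) * f j
          + (ξ ^ (2 * j + (a j).val)) ^ (s * u + m) * f2 j) = 0 :=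
        Finset.sum_eq_zero fun j hj => by rw [← mul_add, hRz j hj, mul_zero]
      rw [Finset.sum_add_distrib] at hR0
      have hIadd : ∑ i ∈ I, (ξ ^ (2 * i + (a i).val)) ^ (s * u + m) * (f i + f2 i)
          = (∑ i ∈ I, (ξ ^ (2 * i + (a i).val)) ^ (s * u + m) * f i)
            + ∑ i ∈ I, (ξ ^ (2 * i + (a i).val)) ^ (s * u + m) * f2 i := by
        rw [← Finset.sum_add_distrib]
        exact Finset.sum_congr rfl fun i _ => by ring
      have hcomb : (ξ ^ e1) ^ (s * u + m) * f ip + (ξ ^ e2) ^ (s * u + m) * f2 ip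
          + ∑ i ∈ I, (ξ ^ (2 * i + (a i).val)) ^ (s * u + m) * (f i + f2 i) = 0 := by
        rw [he1, he2]
        linear_combination hA + hB + hIadd - hR0
      have hterm : ∀ (e : ℕ) (z : 𝔽), x e ^ s * (ξ ^ (e * m) * z) = (ξ ^ e) ^ (s * u + m) * z := by
        intro e z
        have hxe : x e = ξ ^ (u * e) := rfl
        rw [hxe, ← mul_assoc, ← pow_mul, ← pow_mul, ← pow_add]
        congr 2
        ring
      rw [hE, Finset.sum_insert he1nm, Finset.sum_insert he2nm,
        Finset.sum_image (fun i hi j hj h => hφinj hi hj h)]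
      have hWe1 : W e1 = ξ ^ (e1 * m) * f ip := if_pos rfl
      have hWe2 : W e2 = ξ ^ (e2 * m) * f2 ip := by
        rw [hW]
        dsimp only
        rw [if_neg (Ne.symm he12), if_pos rfl]
      have hWφ : ∀ i ∈ I, W (φ i) = ξ ^ (φ i * m) * (f i + f2 i) := by
        intro i hi
        rw [hW]
        dsimp only
        rw [if_neg (hφne i hi).1, if_neg (hφne i hi).2, hhalf i]
      rw [hWe1, hWe2, hterm e1, hterm e2]
      have hIrw : ∑ i ∈ I, x (φ i) ^ s * W (φ i)
          = ∑ i ∈ I, (ξ ^ (2 * i + (a i).val)) ^ (s * u + m) * (f i + f2 i) := by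
        refine Finset.sum_congr rfl fun i hi => ?_
        rw [hWφ i hi, hterm (φ i)]
      rw [hIrw]
      linear_combination hcomb
    have hEbound : ∀ e ∈ E, e < 2 * nbar := by
      intro e he
      rw [hE] at he
      simp only [Finset.mem_insert, Finset.mem_image] at he
      rcases he with h | h | ⟨i, hi, h⟩
      · have := hvlt (a ip); omega
      · have := hvlt (a2 ip); rw [he2] at h; omega
      · have := hvlt (a i); have h2 := hImemlt i hi
        rw [← h]
        simp only [hφ]
        omega
    have hxinj : Set.InjOn x E := by
      intro d1 h1 d2 h2 he
      exact hupow d1 d2 (hEbound d1 h1) (hEbound d2 h2) he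
    have hWz := vand_zero E x W hxinj hsum
    have hξpne : ∀ e : ℕ, ξ ^ (e * m) ≠ 0 := fun e => pow_ne_zero _ hξne
    have hfz : f ip = 0 := by
      have h1 := hWz e1 (by rw [hE]; exact Finset.mem_insert_self _ _)
      rw [hW] at h1
      simp only [if_pos rfl] at h1
      rcases mul_eq_zero.mp h1 with h | h
      · exact absurd h (hξpne e1)
      · exact h
    have hf2z : f2 ip = 0 := by
      have h1 := hWz e2 (by
        rw [hE]; exact Finset.mem_insert_of_mem (Finset.mem_insert_self _ _))
      rw [hW] at h1
      dsimp only at h1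
      rw [if_neg (Ne.symm he12), if_pos rfl] at h1
      rcases mul_eq_zero.mp h1 with h | h
      · exact absurd h (hξpne e2)
      · exact h
    refine ⟨hfz, hf2z, ?_⟩
    intro i hilt hiR hiip
    have hiI : i ∈ I := by
      rw [hI]
      exact Finset.mem_erase.mpr ⟨hiip, Finset.mem_sdiff.mpr ⟨Finset.mem_range.mpr hilt, hiR⟩⟩
    have h1 := hWz (φ i) (by
      rw [hE]
      exact Finset.mem_insert_of_mem (Finset.mem_insert_of_mem
        (Finset.mem_image_of_mem φ hiI)))
    rw [hW] at h1
    dsimp only at h1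
    rw [if_neg (hφne i hiI).1, if_neg (hφne i hiI).2, hhalf i] at h1
    rcases mul_eq_zero.mp h1 with h | h
    · exact absurd h (hξpne (φ i))
    · exact h
  constructor
  · intro m hm a ha
    obtain ⟨h1, h2, -⟩ := key m hm a ha
    constructor
    · have h3 : (∑ g ∈ Finset.range u, θ ^ (g * m) * c (iF p * u + g) a)
          - ∑ g ∈ Finset.range u, θ ^ (g * m) * c' (iF p * u + g) a = 0 := by
        rw [← Finset.sum_sub_distrib]
        rw [← h1]
        exact Finset.sum_congr rfl fun g _ => by ring
      exact sub_eq_zero.mp h3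
    · have h3 : (∑ g ∈ Finset.range u, θ ^ (g * m) * c (iF p * u + g) (flipCoord a (iF p)))
          - ∑ g ∈ Finset.range u, θ ^ (g * m) * c' (iF p * u + g) (flipCoord a (iF p)) = 0 := by
        rw [← Finset.sum_sub_distrib]
        rw [← h2]
        exact Finset.sum_congr rfl fun g _ => by ring
      exact sub_eq_zero.mp h3
  · intro q hq hqp m hm a ha
    obtain ⟨-, -, h3⟩ := key m hm a ha
    have hiq : iF q ≠ iF p := fun h =>
      hqp (hiF.injOn (Set.mem_Iio.mpr hq) (Set.mem_Iio.mpr hp) h)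
    have hiqR : iF q ∉ R := fun hmem => hRF (iF q) hmem q hq rfl
    have h4 := h3 (iF q) (hiFn q hq) hiqR hiq
    simp only [Hval2]
    simp only [mul_sub, Finset.sum_sub_distrib] at h4
    linear_combination h4
end

section
/- Let m̄ ≥ 1 be an integer, n' = 2^m̄ − 1, and n̄ ≥ n'. Let V₀ ⊆ 𝔽₂^{n'} be the kernel of an m̄ × n' matrix over 𝔽₂ whose columns are exactly the distinct nonzero vectors of 𝔽₂^{m̄}. Let S ⊆ {0,…,n̄−1} with |S| = n', let p ∈ S, and let 𝔽 be a field. Suppose σ, σ' : 𝔽₂^{n̄} → 𝔽 satisfy, for every a ∈ 𝔽₂^{n̄} with a|_S ∈ V₀: (i) σ(a) = σ'(a); (ii) σ(a + e_p) = σ'(a + e_p); and (iii) σ(a) + σ(a + e_i) = σ'(a) + σ'(a + e_i) for every i ∈ S∖{p}. Then σ = σ'. -/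
open Function Matrix

lemma flipCoord_flipCoord (a : ℕ → ZMod 2) (i : ℕ) : flipCoord (flipCoord a i) i = a := by
  funext t
  rcases eq_or_ne t i with rfl | ht
  · simp [flipCoord, add_assoc, CharTwo.add_self_eq_zero]
  · simp [flipCoord, update_of_ne ht]

lemma flipCoord_comp_of_injective {ι : Type*} [DecidableEq ι] {e : ι → ℕ} (he : Injective e)
    (a : ℕ → ZMod 2) (j : ι) : flipCoord a (e j) ∘ e = a ∘ e + Pi.single j 1 := by
  funext t
  rcases eq_or_ne t j with rfl | ht
  · simp [flipCoord]
  · simp [flipCoord, update_of_ne (he.ne ht), Pi.single_eq_of_ne ht]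

theorem eq_of_forall_mem_or_flipCoord_mem {𝔽 : Type*} [Add 𝔽] [IsLeftCancelAdd 𝔽]
    (C : Set (ℕ → ZMod 2)) (S : Finset ℕ) (p : ℕ)
    (hcover : ∀ a, a ∈ C ∨ ∃ i ∈ S, flipCoord a i ∈ C)
    (σ σ' : (ℕ → ZMod 2) → 𝔽)
    (h1 : ∀ a ∈ C, σ a = σ' a)
    (h2 : ∀ a ∈ C, σ (flipCoord a p) = σ' (flipCoord a p))
    (h3 : ∀ a ∈ C, ∀ i ∈ S, i ≠ p → σ a + σ (flipCoord a i) = σ' a + σ' (flipCoord a i)) :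
    σ = σ' := by
  funext a
  obtain ha | ⟨i, hi, hb⟩ := hcover a
  · exact h1 a ha
  have hflip : flipCoord (flipCoord a i) i = a := flipCoord_flipCoord a i
  rcases eq_or_ne i p with rfl | hip
  · simpa only [hflip] using h2 _ hb
  · have h := h3 _ hb i hi hip
    rw [hflip, h1 _ hb] at h
    exact add_left_cancel h

theorem Matrix.exists_col_eq_of_card_eq {m ι R : Type*} [Fintype m] [DecidableEq m]
    [Fintype ι] [Zero R] [Fintype R] [DecidableEq R] (H : Matrix m ι R)
    (hinj : Injective fun j i => H i j) (hnz : ∀ j, (fun i => H i j) ≠ 0)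
    (hcard : Fintype.card ι = Fintype.card R ^ Fintype.card m - 1)
    (v : m → R) (hv : v ≠ 0) : ∃ j, (fun i => H i j) = v := by
  let col : ι → {v : m → R // v ≠ 0} := fun j => ⟨fun i => H i j, hnz j⟩
  have hbij : Bijective col := by
    refine (Fintype.bijective_iff_injective_and_card col).2
      ⟨fun x y hxy => hinj (congrArg Subtype.val hxy), ?_⟩
    rw [Fintype.card_subtype_compl, Fintype.card_subtype_eq, Fintype.card_fun, hcard]
  obtain ⟨j, hj⟩ := hbij.2 ⟨v, hv⟩
  exact ⟨j, congrArg Subtype.val hj⟩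

theorem Matrix.exists_mulVec_add_single_eq_zero {m ι : Type*} [Fintype m] [DecidableEq m]
    [Fintype ι] [DecidableEq ι] (H : Matrix m ι (ZMod 2))
    (hinj : Injective fun j i => H i j) (hnz : ∀ j, (fun i => H i j) ≠ 0)
    (hcard : Fintype.card ι = 2 ^ Fintype.card m - 1)
    (f : ι → ZMod 2) (hf : H *ᵥ f ≠ 0) : ∃ j, H *ᵥ (f + Pi.single j 1) = 0 := by
  obtain ⟨j, hj⟩ := H.exists_col_eq_of_card_eq hinj hnz (by simpa using hcard) _ hf
  refine ⟨j, ?_⟩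
  rw [mulVec_add, mulVec_single_one, col, ← hj]
  exact funext fun i => CharTwo.add_self_eq_zero _

theorem stmt17_general {𝔽 : Type*} [Field 𝔽]
    (mbar n' : ℕ) (hn' : n' = 2 ^ mbar - 1)
    (Hm : Matrix (Fin mbar) (Fin n') (ZMod 2))
    (hinj : Function.Injective fun j i => Hm i j)
    (hnz : ∀ j, (fun i => Hm i j) ≠ 0)
    (V₀ : Set (Fin n' → ZMod 2)) (hV₀ : V₀ = {f | Hm.mulVec f = 0})
    (S : Finset ℕ) (hScard : S.card = n')
    (p : ℕ)
    (σ σ' : (ℕ → ZMod 2) → 𝔽)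
    (h1 : ∀ a : ℕ → ZMod 2,
      (fun t : Fin n' => a ((S.orderIsoOfFin hScard t : ℕ))) ∈ V₀ → σ a = σ' a)
    (h2 : ∀ a : ℕ → ZMod 2,
      (fun t : Fin n' => a ((S.orderIsoOfFin hScard t : ℕ))) ∈ V₀ →
      σ (flipCoord a p) = σ' (flipCoord a p))
    (h3 : ∀ a : ℕ → ZMod 2,
      (fun t : Fin n' => a ((S.orderIsoOfFin hScard t : ℕ))) ∈ V₀ →
      ∀ i ∈ S, i ≠ p →
        σ a + σ (flipCoord a i) = σ' a + σ' (flipCoord a i)) :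
    σ = σ' := by
  subst hV₀
  set e : Fin n' → ℕ := fun t => S.orderIsoOfFin hScard t
  have he : Injective e := Subtype.val_injective.comp (S.orderIsoOfFin hScard).injective
  refine eq_of_forall_mem_or_flipCoord_mem {a | Hm *ᵥ (a ∘ e) = 0} S p (fun a => ?_) σ σ' h1 h2 h3
  by_cases ha : Hm *ᵥ (a ∘ e) = 0
  · exact .inl ha
  obtain ⟨j, hj⟩ := Hm.exists_mulVec_add_single_eq_zero hinj hnz (by simpa using hn') _ ha
  refine .inr ⟨e j, (S.orderIsoOfFin hScard j).2, ?_⟩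
  show Hm *ᵥ (flipCoord a (e j) ∘ e) = 0
  rwa [flipCoord_comp_of_injective he]

/-- **Abstract form of Lemma 6 of the paper** (cooperative phase of the second
construction): let `V₀ ⊆ 𝔽₂^{n'}` be the Hamming code (kernel of an `mbar × n'` matrix
whose columns are the distinct nonzero vectors of `𝔽₂^{mbar}`, `n' = 2^{mbar} − 1`),
let `S ⊆ {0,…,nbar−1}` with `|S| = n'` and `p ∈ S`.  If `σ, σ' : 𝔽₂^{nbar} → 𝔽` agree,
for every `a` whose restriction to `S` (in increasing order) lies in `V₀`, on (i) `σ a`,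
(ii) `σ (a + e_p)`, and (iii) the sums `σ a + σ (a + e_i)` for every `i ∈ S∖{p}`,
then `σ = σ'`. -/
theorem stmt17 {𝔽 : Type*} [Field 𝔽]
    (mbar n' nbar : ℕ) (hmbar : 1 ≤ mbar) (hn' : n' = 2 ^ mbar - 1) (hnbar : n' ≤ nbar)
    (Hm : Matrix (Fin mbar) (Fin n') (ZMod 2))
    (hinj : Function.Injective fun j i => Hm i j)
    (hnz : ∀ j, (fun i => Hm i j) ≠ 0)
    (V₀ : Set (Fin n' → ZMod 2)) (hV₀ : V₀ = {f | Hm.mulVec f = 0})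
    (S : Finset ℕ) (hSsub : S ⊆ Finset.range nbar) (hScard : S.card = n')
    (p : ℕ) (hp : p ∈ S)
    (σ σ' : (ℕ → ZMod 2) → 𝔽)
    (h1 : ∀ a : ℕ → ZMod 2,
      (fun t : Fin n' => a ((S.orderIsoOfFin hScard t : ℕ))) ∈ V₀ → σ a = σ' a)
    (h2 : ∀ a : ℕ → ZMod 2,
      (fun t : Fin n' => a ((S.orderIsoOfFin hScard t : ℕ))) ∈ V₀ →
      σ (flipCoord a p) = σ' (flipCoord a p))
    (h3 : ∀ a : ℕ → ZMod 2,
      (fun t : Fin n' => a ((S.orderIsoOfFin hScard t : ℕ))) ∈ V₀ →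
      ∀ i ∈ S, i ≠ p →
        σ a + σ (flipCoord a i) = σ' a + σ' (flipCoord a i)) :
    σ = σ' :=
  stmt17_general mbar n' hn' Hm hinj hnz V₀ hV₀ S hScard p σ σ' h1 h2 h3
end
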